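/- arXiv:0912.0328 — 7 statements merged into one kernel-verified Lean document; each statement's English description precedes it below -/
import Mathlib

section
/- The time-like graph G with vertices t_j = j/7 for j = 0, 1, ..., 7 and edge set {E_{01}, E_{12}, E_{13}, E_{24}, E_{25}, E_{34}, E_{35}, E_{46}, E_{56}, E_{67}} is not an NCC-graph; in particular, the cells (sigma(3,4,6), sigma(3,5,6)) and (sigma(2,5,6), sigma(2,4,6)) form a pair of minimal co-terminal cells in G. -/
/-- A time-like graph (TLG): vertices `t 0 ≤ t 1 ≤ ⋯ ≤ t N` (formally distinct, labeled by
reals, `t 0 = 0`, `t N = 1`, interior labels in `(0,1)`), and a set of directed edges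
(at most two parallel edges between a pair of vertices, encoded by the `Fin 2` copy index),
each edge strictly increasing in label; the extreme vertices have degree `1` and every
other vertex has degree `3`, with at least one incoming and one outgoing edge. -/
structure TLG where
  N : ℕ
  hN : 1 ≤ N
  t : Fin (N + 1) → ℝ
  ht0 : t 0 = 0
  htN : t (Fin.last N) = 1
  hmono : Monotone t
  hint : ∀ k : Fin (N + 1), k ≠ 0 → k ≠ Fin.last N → 0 < t k ∧ t k < 1
  edges : Finset ((Fin (N + 1) × Fin (N + 1)) × Fin 2)
  hedge : ∀ e ∈ edges, t e.1.1 < t e.1.2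
  hdeg : ∀ v : Fin (N + 1),
      (edges.filter fun e => e.1.1 = v ∨ e.1.2 = v).card =
        if v = 0 ∨ v = Fin.last N then 1 else 3
  hio : ∀ v : Fin (N + 1), v ≠ 0 → v ≠ Fin.last N →
      (∃ e ∈ edges, e.1.2 = v) ∧ (∃ e ∈ edges, e.1.1 = v)

namespace TLG

variable (G : TLG)

/-- The type of (potential) edges of `G`: an ordered pair of vertices together with a copy
index distinguishing parallel edges. -/
abbrev Edge := (Fin (G.N + 1) × Fin (G.N + 1)) × Fin 2

/-- A time path: a nonempty list of edges of `G` in which the end vertex of each edge is the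
start vertex of the next one.  (Vertices along it are automatically strictly increasing.) -/
def IsTimePath (l : List G.Edge) : Prop :=
  l ≠ [] ∧ (∀ e ∈ l, e ∈ G.edges) ∧ l.Chain' fun e f => e.1.2 = f.1.1

/-- The first vertex of a path. -/
def pathStart (l : List G.Edge) : Option (Fin (G.N + 1)) := l.head?.map fun e => e.1.1

/-- The last vertex of a path. -/
def pathEnd (l : List G.Edge) : Option (Fin (G.N + 1)) := l.getLast?.map fun e => e.1.2

/-- A full time path goes from the initial vertex `t 0` to the terminal vertex `t N`. -/
def IsFullTimePath (l : List G.Edge) : Prop :=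
  G.IsTimePath l ∧ G.pathStart l = some 0 ∧ G.pathEnd l = some (Fin.last G.N)

/-- The interior vertices of a time path: the start vertices of all edges after the first. -/
def interior (l : List G.Edge) : Set (Fin (G.N + 1)) := {v | ∃ e ∈ l.tail, e.1.1 = v}

/-- A cell with start `j` and end `k`: a pair of distinct co-terminal time paths whose sets
of interior vertices are disjoint. -/
def IsCell (j k : Fin (G.N + 1)) (σ₁ σ₂ : List G.Edge) : Prop :=
  G.IsTimePath σ₁ ∧ G.IsTimePath σ₂ ∧ σ₁ ≠ σ₂ ∧
    G.pathStart σ₁ = some j ∧ G.pathStart σ₂ = some j ∧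
    G.pathEnd σ₁ = some k ∧ G.pathEnd σ₂ = some k ∧
    ∀ v, v ∈ G.interior σ₁ → v ∉ G.interior σ₂

/-- A cell is forward-minimal if its end has the smallest time label among the ends of all
cells with the same start. -/
def IsForwardMinimal (j k : Fin (G.N + 1)) (σ₁ σ₂ : List G.Edge) : Prop :=
  G.IsCell j k σ₁ σ₂ ∧ ∀ k' σ₁' σ₂', G.IsCell j k' σ₁' σ₂' → G.t k ≤ G.t k'

/-- A cell is backward-minimal if its start has the largest time label among the starts of
all cells with the same end. -/
def IsBackwardMinimal (j k : Fin (G.N + 1)) (σ₁ σ₂ : List G.Edge) : Prop :=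
  G.IsCell j k σ₁ σ₂ ∧ ∀ j' σ₁' σ₂', G.IsCell j' k σ₁' σ₂' → G.t j' ≤ G.t j

/-- `G` has a pair of minimal co-terminal cells: either two forward-minimal cells with
different starts and the same end, or two backward-minimal cells with the same start and
different ends. -/
def HasMinimalCoTerminalCells : Prop :=
  (∃ j j' k σ₁ σ₂ σ₁' σ₂', j ≠ j' ∧
      G.IsForwardMinimal j k σ₁ σ₂ ∧ G.IsForwardMinimal j' k σ₁' σ₂') ∨
  (∃ j k k' σ₁ σ₂ σ₁' σ₂', k ≠ k' ∧
      G.IsBackwardMinimal j k σ₁ σ₂ ∧ G.IsBackwardMinimal j k' σ₁' σ₂')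

/-- A TLG is an NCC-graph if it contains no pair of minimal co-terminal cells. -/
def IsNCC : Prop := ¬ G.HasMinimalCoTerminalCells

end TLG


/-- The TLG of Figure 2: vertices `t j = j/7` for `j = 0, …, 7` and edges
`E_{01}, E_{12}, E_{13}, E_{24}, E_{25}, E_{34}, E_{35}, E_{46}, E_{56}, E_{67}`. -/
noncomputable def fig2 : TLG where
  N := 7
  hN := by norm_num
  t := fun j => (j : ℝ) / 7
  ht0 := by norm_num
  htN := by norm_num [Fin.last]
  hmono := by
    intro a b hab
    have h : (a : ℝ) ≤ (b : ℝ) := by exact_mod_cast (Fin.le_def.mp hab)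
    show (a : ℝ) / 7 ≤ (b : ℝ) / 7
    gcongr
  hint := by
    intro k h0 hl
    fin_cases k <;> simp_all [Fin.last] <;> norm_num
  edges :=
    {((0,1),0), ((1,2),0), ((1,3),0), ((2,4),0), ((2,5),0), ((3,4),0), ((3,5),0),
     ((4,6),0), ((5,6),0), ((6,7),0)}
  hedge := by
    intro e he
    fin_cases he <;> norm_num [show ((0:Fin 8):ℕ)=0 from rfl, show ((1:Fin 8):ℕ)=1 from rfl, show ((2:Fin 8):ℕ)=2 from rfl, show ((3:Fin 8):ℕ)=3 from rfl, show ((4:Fin 8):ℕ)=4 from rfl, show ((5:Fin 8):ℕ)=5 from rfl, show ((6:Fin 8):ℕ)=6 from rfl, show ((7:Fin 8):ℕ)=7 from rfl]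
  hdeg := by decide
  hio := by decide

/-!
Time labels strictly increase along a time path, so a path whose first edge ends after its
last edge begins is a single edge. In `fig2` every edge leaving `2` or `3` ends at `4` or `5`,
and every edge that leaves a vertex `≥ 2` and ends before `6` starts at `2` or `3`. Hence from
`j ∈ {2, 3}` the only time paths ending before `6` are single edges, and these have no parallel
copies; a cell, being a pair of distinct co-terminal paths, therefore ends at `6` or later.
Both cells `(σ(3,4,6), σ(3,5,6))` and `(σ(2,5,6), σ(2,4,6))` end at `6`.
-/

namespace TLG

variable {G : TLG}

theorem IsTimePath.of_cons {e f : G.Edge} {l : List G.Edge}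
    (h : G.IsTimePath (e :: f :: l)) : G.IsTimePath (f :: l) :=
  ⟨List.cons_ne_nil f l, fun x hx => h.2.1 x (List.mem_cons_of_mem e hx), h.2.2.tail⟩

theorem IsTimePath.t_head_le {e : G.Edge} {l : List G.Edge} (h : G.IsTimePath (e :: l))
    {f : G.Edge} (hf : f ∈ e :: l) : G.t e.1.1 ≤ G.t f.1.1 := by
  induction l generalizing e with
  | nil => rw [List.mem_singleton.mp hf]
  | cons e' l ih =>
    rcases List.mem_cons.mp hf with rfl | hf
    · exact le_rfl
    have hee' : e.1.2 = e'.1.1 := (List.isChain_cons_cons.mp h.2.2).1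
    calc G.t e.1.1 ≤ G.t e.1.2 := (G.hedge e (h.2.1 e List.mem_cons_self)).le
      _ = G.t e'.1.1 := by rw [hee']
      _ ≤ G.t f.1.1 := ih h.of_cons hf

theorem IsTimePath.tail_eq_nil_of_lt {e g : G.Edge} {l : List G.Edge}
    (h : G.IsTimePath (e :: l)) (hg : (e :: l).getLast? = some g)
    (hlt : G.t g.1.1 < G.t e.1.2) : l = [] := by
  cases l with
  | nil => rfl
  | cons e' l =>
    have hee' : e.1.2 = e'.1.1 := (List.isChain_cons_cons.mp h.2.2).1
    have hg' : g ∈ e' :: l := List.mem_of_getLast? (List.getLast?_cons_cons ▸ hg)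
    exact absurd (hee' ▸ h.of_cons.t_head_le hg') hlt.not_ge

theorem IsTimePath.exists_head {l : List G.Edge} (h : G.IsTimePath l) {j : Fin (G.N + 1)}
    (hj : G.pathStart l = some j) : ∃ e l', l = e :: l' ∧ e ∈ G.edges ∧ e.1.1 = j := by
  obtain ⟨e, l', rfl⟩ := List.exists_cons_of_ne_nil h.1
  exact ⟨e, l', rfl, h.2.1 e List.mem_cons_self, Option.some_injective _ hj⟩

theorem IsTimePath.exists_getLast {l : List G.Edge} (h : G.IsTimePath l)
    {k : Fin (G.N + 1)} (hk : G.pathEnd l = some k) :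
    ∃ g, l.getLast? = some g ∧ g ∈ G.edges ∧ g.1.2 = k := by
  obtain ⟨g, hg, hgk⟩ := Option.map_eq_some_iff.mp hk
  exact ⟨g, hg, h.2.1 g (List.mem_of_getLast? hg), hgk⟩

theorem isTimePath_pair {x y : G.Edge} (hx : x ∈ G.edges) (hy : y ∈ G.edges)
    (hxy : x.1.2 = y.1.1) : G.IsTimePath [x, y] := by
  refine ⟨List.cons_ne_nil _ _, ?_, List.isChain_pair.mpr hxy⟩
  simp only [List.mem_cons, List.not_mem_nil, or_false]
  rintro _ (rfl | rfl) <;> assumption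

theorem interior_pair (x y : G.Edge) : G.interior [x, y] = {y.1.1} := by
  ext v
  simp [interior, eq_comm]

theorem isCell_of_ne {j a b k : Fin (G.N + 1)} {c₁ c₂ d₁ d₂ : Fin 2}
    (hja : ((j, a), c₁) ∈ G.edges) (hak : ((a, k), c₂) ∈ G.edges)
    (hjb : ((j, b), d₁) ∈ G.edges) (hbk : ((b, k), d₂) ∈ G.edges) (hab : a ≠ b) :
    G.IsCell j k [((j, a), c₁), ((a, k), c₂)] [((j, b), d₁), ((b, k), d₂)] := by
  refine ⟨isTimePath_pair hja hak rfl, isTimePath_pair hjb hbk rfl, ?_, rfl, rfl, rfl, rfl, ?_⟩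
  · simp [hab]
  · simpa [interior_pair] using hab

end TLG

theorem fig2_t_strictMono : StrictMono fig2.t := by
  intro a b h
  simp only [fig2]
  gcongr
  exact_mod_cast h

theorem fig2_edges_snd_eq_zero : ∀ e ∈ fig2.edges, e.2 = 0 := by
  decide +kernel

theorem fig2_four_le_of_mem_edges :
    ∀ e ∈ fig2.edges, 2 ≤ e.1.1 → e.1.1 ≤ 3 → 4 ≤ e.1.2 := by
  decide +kernel

theorem fig2_le_three_of_mem_edges :
    ∀ e ∈ fig2.edges, 2 ≤ e.1.1 → e.1.2 < 6 → e.1.1 ≤ 3 := by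
  decide +kernel

theorem fig2_eq_singleton_of_isTimePath {j k : Fin 8} (hj₂ : 2 ≤ j) (hj₃ : j ≤ 3)
    (hk : k < 6) {l : List fig2.Edge} (h : fig2.IsTimePath l) (hs : fig2.pathStart l = some j)
    (he : fig2.pathEnd l = some k) : l = [((j, k), 0)] := by
  obtain ⟨e, l', rfl, heE, hej⟩ := h.exists_head hs
  obtain ⟨g, hg, hgE, hgk⟩ := h.exists_getLast he
  have hg_ge : j ≤ g.1.1 :=
    hej ▸ fig2_t_strictMono.le_iff_le.mp (h.t_head_le (List.mem_of_getLast? hg))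
  have hg_le : g.1.1 ≤ 3 := fig2_le_three_of_mem_edges g hgE (hj₂.trans hg_ge) (hgk ▸ hk)
  have he_ge : 4 ≤ e.1.2 := fig2_four_le_of_mem_edges e heE (hej ▸ hj₂) (hej ▸ hj₃)
  obtain rfl : l' = [] := h.tail_eq_nil_of_lt hg
    (fig2_t_strictMono (hg_le.trans_lt (he_ge.trans_lt' (by decide))))
  obtain rfl : e = g := Option.some_injective _ hg
  exact congrArg ([·]) (Prod.ext (Prod.ext hej hgk) (fig2_edges_snd_eq_zero e heE))

theorem fig2_t_six_le_of_isCell {j k : Fin 8} (hj₂ : 2 ≤ j) (hj₃ : j ≤ 3)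
    {σ₁ σ₂ : List fig2.Edge} (hc : fig2.IsCell j k σ₁ σ₂) : fig2.t 6 ≤ fig2.t k := by
  obtain ⟨h₁, h₂, hne, hs₁, hs₂, he₁, he₂, -⟩ := hc
  refine fig2_t_strictMono.le_iff_le.mpr (le_of_not_gt fun hk => hne ?_)
  rw [fig2_eq_singleton_of_isTimePath hj₂ hj₃ hk h₁ hs₁ he₁,
    fig2_eq_singleton_of_isTimePath hj₂ hj₃ hk h₂ hs₂ he₂]

/-- **Theorem (Burdzy–Pal).** The TLG of Figure 2 is not an NCC-graph: the cells
`(σ(3,4,6), σ(3,5,6))` and `(σ(2,5,6), σ(2,4,6))` form a pair of minimal co-terminal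
cells (both are forward-minimal, with different starts and the same end). -/
theorem fig2_not_isNCC :
    fig2.IsForwardMinimal 3 6 [((3,4),0), ((4,6),0)] [((3,5),0), ((5,6),0)] ∧
    fig2.IsForwardMinimal 2 6 [((2,5),0), ((5,6),0)] [((2,4),0), ((4,6),0)] ∧
    fig2.HasMinimalCoTerminalCells ∧ ¬ fig2.IsNCC := by
  have h₃ : fig2.IsForwardMinimal 3 6 [((3,4),0), ((4,6),0)] [((3,5),0), ((5,6),0)] :=
    ⟨TLG.isCell_of_ne (by decide +kernel) (by decide +kernel) (by decide +kernel)
      (by decide +kernel) (by decide),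
      fun _ _ _ => fig2_t_six_le_of_isCell (by decide) (by decide)⟩
  have h₂ : fig2.IsForwardMinimal 2 6 [((2,5),0), ((5,6),0)] [((2,4),0), ((4,6),0)] :=
    ⟨TLG.isCell_of_ne (by decide +kernel) (by decide +kernel) (by decide +kernel)
      (by decide +kernel) (by decide),
      fun _ _ _ => fig2_t_six_le_of_isCell (by decide) (by decide)⟩
  have hM : fig2.HasMinimalCoTerminalCells :=
    .inl ⟨3, 2, 6, _, _, _, _, by decide, h₃, h₂⟩
  exact ⟨h₃, h₂, hM, not_not_intro hM⟩
end

section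
/- In any finite time-like graph, every cell that is forward-minimal or backward-minimal is simple. -/
namespace TLG

variable (G : TLG)

/-- A pair of time paths is simple if no time path of `G` starts at an interior vertex of
one of them and ends at an interior vertex of the other. -/
def CellIsSimple (σ₁ σ₂ : List G.Edge) : Prop :=
  ¬ ∃ (τ : List G.Edge) (v w : Fin (G.N + 1)), G.IsTimePath τ ∧
      G.pathStart τ = some v ∧ G.pathEnd τ = some w ∧
      ((v ∈ G.interior σ₁ ∧ w ∈ G.interior σ₂) ∨
       (v ∈ G.interior σ₂ ∧ w ∈ G.interior σ₁))

end TLG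

/-!
Suppose a time path `τ` runs from an interior vertex `v` of `σ₁` to an interior vertex of `σ₂`.
Cut `τ` at its first visit `w'` to the interior of `σ₂`. The initial segment of `σ₁` up to `v`
followed by this piece of `τ`, together with the initial segment of `σ₂` up to `w'`, is a cell
with the same start ending at `w'`, strictly before the end of the original cell, so the
original cell is not forward-minimal. Dually, cutting `τ` at its last visit to the interior of
`σ₁` and using final segments gives a cell with the same end and a strictly later start.
-/

namespace TLG

def IsTimePathFromTo (G : TLG) (u w : Fin (G.N + 1)) (l : List G.Edge) : Prop :=
  G.IsTimePath l ∧ G.pathStart l = some u ∧ G.pathEnd l = some w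

variable {G : TLG} {p q l : List G.Edge} {u v w j k : Fin (G.N + 1)}

theorem IsTimePathFromTo.ne_nil (h : G.IsTimePathFromTo u w l) : l ≠ [] := h.1.1

theorem pathStart_append (hp : p ≠ []) : G.pathStart (p ++ q) = G.pathStart p := by
  cases p with
  | nil => contradiction
  | cons e p => rfl

theorem pathEnd_append (hq : q ≠ []) : G.pathEnd (p ++ q) = G.pathEnd q := by
  simp [pathEnd, List.getLast?_eq_some_getLast hq]

theorem isTimePath_append (hp : p ≠ []) (hq : q ≠ []) :
    G.IsTimePath (p ++ q) ↔ G.IsTimePath p ∧ G.IsTimePath q ∧ G.pathEnd p = G.pathStart q := by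
  simp only [IsTimePath, List.Chain', pathEnd, pathStart, List.isChain_append,
    List.getLast?_eq_some_getLast hp, List.head?_eq_some_head hq, Option.mem_def,
    Option.some.injEq, forall_eq', Option.map_some, List.mem_append, ne_eq,
    List.append_eq_nil_iff, hp, hq]
  grind

theorem isTimePathFromTo_append (hp : p ≠ []) (hq : q ≠ []) :
    G.IsTimePathFromTo u w (p ++ q) ↔
      ∃ v, G.IsTimePathFromTo u v p ∧ G.IsTimePathFromTo v w q := by
  obtain ⟨v, hv⟩ : ∃ v, G.pathStart q = some v := by
    obtain ⟨e, q, rfl⟩ := List.exists_cons_of_ne_nil hq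
    exact ⟨_, rfl⟩
  simp only [IsTimePathFromTo, isTimePath_append hp hq, pathStart_append hp, pathEnd_append hq]
  constructor
  · rintro ⟨⟨hp', hq', hpq⟩, hu, hw⟩
    exact ⟨v, ⟨hp', hu, hpq.trans hv⟩, hq', hv, hw⟩
  · rintro ⟨v, ⟨hp', hu, hpv⟩, hq', hqv, hw⟩
    exact ⟨⟨hp', hq', hpv.trans hqv.symm⟩, hu, hw⟩

theorem IsTimePathFromTo.append (hp : G.IsTimePathFromTo u v p) (hq : G.IsTimePathFromTo v w q) :
    G.IsTimePathFromTo u w (p ++ q) :=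
  (isTimePathFromTo_append hp.ne_nil hq.ne_nil).2 ⟨v, hp, hq⟩

theorem interior_append (hp : p ≠ []) (hq : G.pathStart q = some v) :
    G.interior (p ++ q) = G.interior p ∪ {v} ∪ G.interior q := by
  obtain ⟨e, q, rfl⟩ := List.exists_cons_of_ne_nil (fun h : q = [] => by simp [h, pathStart] at hq)
  cases p with
  | nil => contradiction
  | cons f p =>
    obtain rfl : e.1.1 = v := Option.some_injective _ hq
    ext x
    simp only [interior, List.cons_append, List.tail_cons, Set.mem_union, Set.mem_ofPred_eq,
      Set.mem_singleton_iff, List.mem_append, List.mem_cons, or_and_right, exists_or, exists_eq_left,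
      or_assoc, @eq_comm _ x]

theorem IsTimePathFromTo.exists_append_of_mem_interior (hl : G.IsTimePathFromTo u w l)
    (hv : v ∈ G.interior l) :
    ∃ p q, l = p ++ q ∧ G.IsTimePathFromTo u v p ∧ G.IsTimePathFromTo v w q := by
  obtain ⟨e, he, rfl⟩ := hv
  obtain ⟨f, l, rfl⟩ := List.exists_cons_of_ne_nil hl.ne_nil
  obtain ⟨s, t, rfl⟩ := List.append_of_mem he
  obtain ⟨v, hp, hq⟩ := (isTimePathFromTo_append (p := f :: s) (q := e :: t) (by simp) (by simp)).1
    (by simpa using hl)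
  obtain rfl : v = e.1.1 := (Option.some_injective _ hq.2.1).symm
  exact ⟨f :: s, e :: t, by simp, hp, hq⟩

theorem IsTimePathFromTo.t_lt (h : G.IsTimePathFromTo u w l) : G.t u < G.t w := by
  induction l generalizing u with
  | nil => exact absurd rfl h.ne_nil
  | cons e l ih =>
    have he : G.t e.1.1 < G.t e.1.2 := G.hedge e (h.1.2.1 e (List.mem_cons_self ..))
    obtain rfl : e.1.1 = u := Option.some_injective _ h.2.1
    rcases eq_or_ne l [] with rfl | hl
    · obtain rfl : e.1.2 = w := Option.some_injective _ h.2.2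
      exact he
    · obtain ⟨v, he', hl'⟩ := (isTimePathFromTo_append (p := [e]) (List.cons_ne_nil _ _) hl).1 h
      obtain rfl : e.1.2 = v := Option.some_injective _ he'.2.2
      exact he.trans (ih hl')

theorem IsTimePathFromTo.exists_interior_disjoint_of_end_mem {S : Set (Fin (G.N + 1))}
    (hl : G.IsTimePathFromTo u w l) (hw : w ∈ S) :
    ∃ l' w', G.IsTimePathFromTo u w' l' ∧ w' ∈ S ∧ Disjoint (G.interior l') S := by
  obtain ⟨l', ⟨w', hl', hw'⟩, hmin⟩ := (InvImage.wf List.length wellFounded_lt).has_min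
    {l' | ∃ w', G.IsTimePathFromTo u w' l' ∧ w' ∈ S} ⟨l, w, hl, hw⟩
  refine ⟨l', w', hl', hw', Set.disjoint_left.2 fun x hx hxS => ?_⟩
  obtain ⟨p, q, rfl, hp, hq⟩ := hl'.exists_append_of_mem_interior hx
  exact hmin p ⟨x, hp, hxS⟩ (by simpa [InvImage] using List.length_pos_iff.2 hq.ne_nil)

theorem IsTimePathFromTo.exists_interior_disjoint_of_start_mem {S : Set (Fin (G.N + 1))}
    (hl : G.IsTimePathFromTo u w l) (hu : u ∈ S) :
    ∃ l' u', G.IsTimePathFromTo u' w l' ∧ u' ∈ S ∧ Disjoint (G.interior l') S := by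
  obtain ⟨l', ⟨u', hl', hu'⟩, hmin⟩ := (InvImage.wf List.length wellFounded_lt).has_min
    {l' | ∃ u', G.IsTimePathFromTo u' w l' ∧ u' ∈ S} ⟨l, u, hl, hu⟩
  refine ⟨l', u', hl', hu', Set.disjoint_left.2 fun x hx hxS => ?_⟩
  obtain ⟨p, q, rfl, hp, hq⟩ := hl'.exists_append_of_mem_interior hx
  exact hmin q ⟨x, hq, hxS⟩ (by simpa [InvImage] using List.length_pos_iff.2 hp.ne_nil)

theorem isCell_iff {σ₁ σ₂ : List G.Edge} :
    G.IsCell j k σ₁ σ₂ ↔ G.IsTimePathFromTo j k σ₁ ∧ G.IsTimePathFromTo j k σ₂ ∧ σ₁ ≠ σ₂ ∧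
      Disjoint (G.interior σ₁) (G.interior σ₂) := by
  simp only [IsCell, IsTimePathFromTo, Set.disjoint_left]
  tauto

theorem isCell_of_disjoint {σ₁ σ₂ : List G.Edge} (h₁ : G.IsTimePathFromTo j k σ₁)
    (h₂ : G.IsTimePathFromTo j k σ₂) (hdisj : Disjoint (G.interior σ₁) (G.interior σ₂))
    (hne : (G.interior σ₁).Nonempty) : G.IsCell j k σ₁ σ₂ :=
  isCell_iff.2 ⟨h₁, h₂, by rintro rfl; simp_all, hdisj⟩

theorem IsCell.symm {σ₁ σ₂ : List G.Edge} (h : G.IsCell j k σ₁ σ₂) : G.IsCell j k σ₂ σ₁ := by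
  obtain ⟨h₁, h₂, hne, hdisj⟩ := isCell_iff.1 h
  exact isCell_iff.2 ⟨h₂, h₁, hne.symm, hdisj.symm⟩

theorem IsCell.exists_isCell_end_lt_of_path {σ₁ σ₂ τ : List G.Edge} (hc : G.IsCell j k σ₁ σ₂)
    (hτ : G.IsTimePathFromTo v w τ) (hv : v ∈ G.interior σ₁) (hw : w ∈ G.interior σ₂) :
    ∃ k' σ₁' σ₂', G.IsCell j k' σ₁' σ₂' ∧ G.t k' < G.t k := by
  obtain ⟨h₁, h₂, -, hdisj⟩ := isCell_iff.1 hc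
  obtain ⟨τ', w', hτ', hw', hτ'disj⟩ := hτ.exists_interior_disjoint_of_end_mem hw
  obtain ⟨p₁, q₁, rfl, hp₁, hq₁⟩ := h₁.exists_append_of_mem_interior hv
  obtain ⟨p₂, q₂, rfl, hp₂, hq₂⟩ := h₂.exists_append_of_mem_interior hw'
  have hsub₁ : G.interior p₁ ∪ {v} ⊆ G.interior (p₁ ++ q₁) := by
    rw [interior_append hp₁.ne_nil hq₁.2.1]
    exact Set.subset_union_left
  have hsub₂ : G.interior p₂ ⊆ G.interior (p₂ ++ q₂) := by
    rw [interior_append hp₂.ne_nil hq₂.2.1]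
    exact Set.subset_union_left.trans Set.subset_union_left
  have hinterior := interior_append (q := τ') hp₁.ne_nil hτ'.2.1
  refine ⟨w', p₁ ++ τ', p₂, isCell_of_disjoint (hp₁.append hτ') hp₂ ?_ ⟨v, ?_⟩, hq₂.t_lt⟩
  · rw [hinterior]
    exact (hdisj.mono hsub₁ hsub₂).union_left (hτ'disj.mono_right hsub₂)
  · simp [hinterior]

theorem IsCell.exists_isCell_lt_start_of_path {σ₁ σ₂ τ : List G.Edge} (hc : G.IsCell j k σ₁ σ₂)
    (hτ : G.IsTimePathFromTo v w τ) (hv : v ∈ G.interior σ₁) (hw : w ∈ G.interior σ₂) :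
    ∃ j' σ₁' σ₂', G.IsCell j' k σ₁' σ₂' ∧ G.t j < G.t j' := by
  obtain ⟨h₁, h₂, -, hdisj⟩ := isCell_iff.1 hc
  obtain ⟨τ', v', hτ', hv', hτ'disj⟩ := hτ.exists_interior_disjoint_of_start_mem hv
  obtain ⟨p₁, q₁, rfl, hp₁, hq₁⟩ := h₁.exists_append_of_mem_interior hv'
  obtain ⟨p₂, q₂, rfl, hp₂, hq₂⟩ := h₂.exists_append_of_mem_interior hw
  have hsub₁ : G.interior q₁ ⊆ G.interior (p₁ ++ q₁) := by
    rw [interior_append hp₁.ne_nil hq₁.2.1]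
    exact Set.subset_union_right
  have hsub₂ : {w} ∪ G.interior q₂ ⊆ G.interior (p₂ ++ q₂) := by
    rw [interior_append hp₂.ne_nil hq₂.2.1, Set.union_assoc]
    exact Set.subset_union_right
  have hinterior := interior_append (p := τ') hτ'.ne_nil hq₂.2.1
  refine ⟨v', τ' ++ q₂, q₁, isCell_of_disjoint (hτ'.append hq₂) hq₁ ?_ ⟨w, ?_⟩, hp₁.t_lt⟩
  · rw [hinterior, Set.union_assoc]
    exact (hτ'disj.mono_right hsub₁).union_left (hdisj.symm.mono hsub₂ hsub₁)
  · simp [hinterior]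

theorem IsForwardMinimal.symm {σ₁ σ₂ : List G.Edge} (h : G.IsForwardMinimal j k σ₁ σ₂) :
    G.IsForwardMinimal j k σ₂ σ₁ :=
  ⟨h.1.symm, h.2⟩

theorem IsBackwardMinimal.symm {σ₁ σ₂ : List G.Edge} (h : G.IsBackwardMinimal j k σ₁ σ₂) :
    G.IsBackwardMinimal j k σ₂ σ₁ :=
  ⟨h.1.symm, h.2⟩

theorem IsForwardMinimal.not_isTimePathFromTo {σ₁ σ₂ τ : List G.Edge}
    (h : G.IsForwardMinimal j k σ₁ σ₂) (hv : v ∈ G.interior σ₁) (hw : w ∈ G.interior σ₂) :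
    ¬ G.IsTimePathFromTo v w τ := fun hτ => by
  obtain ⟨k', σ₁', σ₂', hc, hlt⟩ := h.1.exists_isCell_end_lt_of_path hτ hv hw
  exact (h.2 k' σ₁' σ₂' hc).not_gt hlt

theorem IsBackwardMinimal.not_isTimePathFromTo {σ₁ σ₂ τ : List G.Edge}
    (h : G.IsBackwardMinimal j k σ₁ σ₂) (hv : v ∈ G.interior σ₁) (hw : w ∈ G.interior σ₂) :
    ¬ G.IsTimePathFromTo v w τ := fun hτ => by
  obtain ⟨j', σ₁', σ₂', hc, hlt⟩ := h.1.exists_isCell_lt_start_of_path hτ hv hw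
  exact (h.2 j' σ₁' σ₂' hc).not_gt hlt

end TLG

/-- **Remark (Burdzy–Pal).** In any finite time-like graph, every cell that is
forward-minimal or backward-minimal is simple. -/
theorem forwardMinimal_or_backwardMinimal_isSimple (G : TLG) (j k : Fin (G.N + 1))
    (σ₁ σ₂ : List G.Edge)
    (h : G.IsForwardMinimal j k σ₁ σ₂ ∨ G.IsBackwardMinimal j k σ₁ σ₂) :
    G.CellIsSimple σ₁ σ₂ := by
  rintro ⟨τ, v, w, hτ, hv, hw, hvw⟩
  have hpath : G.IsTimePathFromTo v w τ := ⟨hτ, hv, hw⟩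
  rcases h with h | h <;> rcases hvw with ⟨h₁, h₂⟩ | ⟨h₂, h₁⟩
  · exact h.not_isTimePathFromTo h₁ h₂ hpath
  · exact h.symm.not_isTimePathFromTo h₂ h₁ hpath
  · exact h.not_isTimePathFromTo h₁ h₂ hpath
  · exact h.symm.not_isTimePathFromTo h₂ h₁ hpath
end

section
/- An integrable process H on an interval T, with almost surely right-continuous sample paths having left limits, satisfies the harness property E[(H(c) - H(b))/(c - b) | F_{a,d}] = (H(d) - H(a))/(d - a) a.s. for all a < b < c < d in T, if and only if for all s < t < u in T, E[H(t) | F_{s,u}] = ((t - s)/(u - s)) H(u) + ((u - t)/(u - s)) H(s) almost surely. -/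
open MeasureTheory Filter Topology

/-!
Conditioning the slope `(H c - H b)/(c - b)` on `ℱ a d` for `a < b < c < d` reduces, by linearity of
conditional expectation, to conditioning `H b` and `H c` on `ℱ a d`; the interpolation formula makes
that slope equal to the slope of the chord from `a` to `d`. Conversely, for `s < t < u` pick
`s < b < c < t`: the harness property on `[s, u]` and on `[s, t]`, glued by the tower property
`ℱ s u ≤ ℱ s t`, gives `(H u - H s)/(u - s) = (E[H t | ℱ s u] - H s)/(t - s)`, which is the
interpolation formula solved for `E[H t | ℱ s u]`.
-/

theorem slope_lineInterp {a b c d x y : ℝ} (hbc : b ≠ c) :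
    ((((c - a) / (d - a)) * y + ((d - c) / (d - a)) * x)
        - (((b - a) / (d - a)) * y + ((d - b) / (d - a)) * x)) / (c - b)
      = (y - x) / (d - a) := by
  have hcb : c - b ≠ 0 := sub_ne_zero.2 hbc.symm
  calc _ = (c - b) * ((y - x) / (d - a)) / (c - b) := by ring
    _ = (y - x) / (d - a) := mul_div_cancel_left₀ _ hcb

theorem eq_lineInterp_of_slope_eq {s t u x y z : ℝ} (hts : t ≠ s) (hus : u ≠ s)
    (h : (y - x) / (u - s) = (z - x) / (t - s)) :
    z = ((t - s) / (u - s)) * y + ((u - t) / (u - s)) * x := by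
  have hts : t - s ≠ 0 := sub_ne_zero.2 hts
  have hus : u - s ≠ 0 := sub_ne_zero.2 hus
  field_simp at h ⊢
  linarith

section CondExp

variable {Ω : Type*} {m m₀ : MeasurableSpace Ω} {μ : Measure Ω} {f g : Ω → ℝ}

theorem condExp_sub_div (hf : Integrable f μ) (hg : Integrable g μ) (k : ℝ) :
    μ[(fun ω => (f ω - g ω) / k) | m] =ᵐ[μ] fun ω => (μ[f | m] ω - μ[g | m] ω) / k := by
  have hfun : (fun ω => (f ω - g ω) / k) = k⁻¹ • (f - g) := by
    ext ω; simp [div_eq_inv_mul]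
  rw [hfun]
  filter_upwards [condExp_smul k⁻¹ (f - g) m, condExp_sub hf hg m] with ω hsmul hsub
  simp [hsmul, hsub, div_eq_inv_mul]

theorem condExp_sub_div_of_stronglyMeasurable (hm : m ≤ m₀) [SigmaFinite (μ.trim hm)]
    (hf : Integrable f μ) (hg : Integrable g μ) (hgm : StronglyMeasurable[m] g) (k : ℝ) :
    μ[(fun ω => (f ω - g ω) / k) | m] =ᵐ[μ] fun ω => (μ[f | m] ω - g ω) / k := by
  simpa only [condExp_of_stronglyMeasurable hm hgm hg] using condExp_sub_div (m := m) hf hg k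

end CondExp

theorem harness_iff_conditional_linear_interpolation_general
    {Ω : Type*} [mΩ : MeasurableSpace Ω] (P : Measure Ω) [IsProbabilityMeasure P]
    (T : Set ℝ) (hT : T.OrdConnected)
    (H : ℝ → Ω → ℝ)
    (hint : ∀ t ∈ T, Integrable (H t) P)
    (ℱ : ℝ → ℝ → MeasurableSpace Ω)
    (hle : ∀ s u, ℱ s u ≤ mΩ)
    (hadapt : ∀ s ∈ T, ∀ u ∈ T, s < u → ∀ r ∈ T, (r ≤ s ∨ u ≤ r) →
      Measurable[ℱ s u] (H r))
    (hmono : ∀ s₁ ∈ T, ∀ s ∈ T, ∀ u ∈ T, ∀ u₁ ∈ T, s₁ ≤ s → s < u → u ≤ u₁ →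
      ℱ s₁ u₁ ≤ ℱ s u) :
    (∀ a ∈ T, ∀ b ∈ T, ∀ c ∈ T, ∀ d ∈ T, a < b → b < c → c < d →
        P[(fun ω => (H c ω - H b ω) / (c - b)) | ℱ a d]
          =ᵐ[P] fun ω => (H d ω - H a ω) / (d - a)) ↔
    (∀ s ∈ T, ∀ t ∈ T, ∀ u ∈ T, s < t → t < u →
        P[H t | ℱ s u]
          =ᵐ[P] fun ω => ((t - s) / (u - s)) * H u ω + ((u - t) / (u - s)) * H s ω) := by
  constructor
  · intro harness s hs t ht u hu hst htu
    obtain ⟨b, hsb, hbt⟩ := exists_between hst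
    obtain ⟨c, hbc, hct⟩ := exists_between hbt
    have hb : b ∈ T := hT.out hs ht ⟨hsb.le, hbt.le⟩
    have hc : c ∈ T := hT.out hs ht ⟨(hsb.trans hbc).le, hct.le⟩
    have hslope : (fun ω => (H u ω - H s ω) / (u - s))
        =ᵐ[P] fun ω => (P[H t | ℱ s u] ω - H s ω) / (t - s) :=
      calc _ =ᵐ[P] P[(fun ω => (H c ω - H b ω) / (c - b)) | ℱ s u] :=
            (harness s hs b hb c hc u hu hsb hbc (hct.trans htu)).symm
        _ =ᵐ[P] P[P[(fun ω => (H c ω - H b ω) / (c - b)) | ℱ s t] | ℱ s u] :=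
            (condExp_condExp_of_le (hmono s hs s hs t ht u hu le_rfl hst htu.le) (hle s t)).symm
        _ =ᵐ[P] P[(fun ω => (H t ω - H s ω) / (t - s)) | ℱ s u] :=
            condExp_congr_ae (harness s hs b hb c hc t ht hsb hbc hct)
        _ =ᵐ[P] _ := condExp_sub_div_of_stronglyMeasurable (hle s u) (hint t ht) (hint s hs)
            (hadapt s hs u hu (hst.trans htu) s hs (Or.inl le_rfl)).stronglyMeasurable _
    filter_upwards [hslope] with ω hω
    exact eq_lineInterp_of_slope_eq hst.ne' (hst.trans htu).ne' hω
  · intro interp a ha b hb c hc d hd hab hbc hcd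
    filter_upwards [condExp_sub_div (m := ℱ a d) (hint c hc) (hint b hb) (c - b),
      interp a ha b hb d hd hab (hbc.trans hcd), interp a ha c hc d hd (hab.trans hbc) hcd]
      with ω hslope hHb hHc
    rw [hslope, hHb, hHc]
    exact slope_lineInterp hbc.ne

/-- For an integrable process `H` on an interval `T ⊆ ℝ` with a.s. RCLL sample paths and a
past-future filtration `ℱ`, the harness property
`E[(H c - H b)/(c - b) | ℱ a d] = (H d - H a)/(d - a)` for all `a < b < c < d` in `T`
holds if and only if
`E[H t | ℱ s u] = ((t - s)/(u - s)) H u + ((u - t)/(u - s)) H s` for all `s < t < u` in `T`. -/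
theorem harness_iff_conditional_linear_interpolation
    {Ω : Type*} [mΩ : MeasurableSpace Ω] (P : Measure Ω) [IsProbabilityMeasure P]
    (T : Set ℝ) (hT : T.OrdConnected)
    (H : ℝ → Ω → ℝ)
    (hint : ∀ t ∈ T, Integrable (H t) P)
    (hrcll : ∀ᵐ ω ∂P,
      (∀ t ∈ T, Tendsto (fun s => H s ω) (𝓝[T ∩ Set.Ioi t] t) (𝓝 (H t ω))) ∧
      (∀ t ∈ T, ∃ L : ℝ, Tendsto (fun s => H s ω) (𝓝[T ∩ Set.Iio t] t) (𝓝 L)))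
    (ℱ : ℝ → ℝ → MeasurableSpace Ω)
    (hle : ∀ s u, ℱ s u ≤ mΩ)
    (hadapt : ∀ s ∈ T, ∀ u ∈ T, s < u → ∀ r ∈ T, (r ≤ s ∨ u ≤ r) →
      Measurable[ℱ s u] (H r))
    (hmono : ∀ s₁ ∈ T, ∀ s ∈ T, ∀ u ∈ T, ∀ u₁ ∈ T, s₁ ≤ s → s < u → u ≤ u₁ →
      ℱ s₁ u₁ ≤ ℱ s u) :
    (∀ a ∈ T, ∀ b ∈ T, ∀ c ∈ T, ∀ d ∈ T, a < b → b < c → c < d →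
        P[(fun ω => (H c ω - H b ω) / (c - b)) | ℱ a d]
          =ᵐ[P] fun ω => (H d ω - H a ω) / (d - a)) ↔
    (∀ s ∈ T, ∀ t ∈ T, ∀ u ∈ T, s < t → t < u →
        P[H t | ℱ s u]
          =ᵐ[P] fun ω => ((t - s) / (u - s)) * H u ω + ((u - t) / (u - s)) * H s ω) :=
  harness_iff_conditional_linear_interpolation_general (mΩ := mΩ) P T hT H hint ℱ hle hadapt hmono
end

section
/- If Y = (Y(t))_{t in [0,1]} is a harness with respect to some past-future filtration, then the family of random variables {Y(s) : 0 <= s <= 1} is uniformly integrable. -/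
open MeasureTheory Filter Topology

/-!
Solving the harness identity on `(s, 3/4, 1)` for `Y s` when `s < 3/4`, and on `(0, 1/4, s)`
when `s ≥ 3/4`, writes `Y s` as a combination, with coefficients at most `4`, of a conditional
expectation of `Y (3/4)` (resp. `Y (1/4)`) and an endpoint value that is measurable for the
conditioning σ-algebra. Hence `|Y s| ≤ E[g | ℱ s 1]` (resp. `E[g | ℱ 0 s]`) for the single
integrable `g = 4 (|Y 0| + |Y (1/4)| + |Y (3/4)| + |Y 1|)`, and the conditional expectations of one
integrable function form a uniformly integrable family.
-/

namespace MeasureTheory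

variable {Ω : Type*} {m m0 : MeasurableSpace Ω} {μ : Measure Ω}

theorem setIntegral_abs_gt_le_of_abs_le {X h : Ω → ℝ} (hX : Integrable X μ)
    (hh : Integrable h μ) (hXh : ∀ᵐ ω ∂μ, |X ω| ≤ h ω) (M : ℝ) :
    ∫ ω in {ω | M < |X ω|}, |X ω| ∂μ ≤ ∫ ω in {ω | M < |h ω|}, |h ω| ∂μ :=
  calc ∫ ω in {ω | M < |X ω|}, |X ω| ∂μ ≤ ∫ ω in {ω | M < |X ω|}, |h ω| ∂μ :=
        setIntegral_mono_ae hX.abs.integrableOn hh.abs.integrableOn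
          (hXh.mono fun _ hω => hω.trans (le_abs_self _))
    _ ≤ ∫ ω in {ω | M < |h ω|}, |h ω| ∂μ :=
        setIntegral_mono_set hh.abs.integrableOn (.of_forall fun _ => abs_nonneg _)
          (hXh.mono fun _ hω hM => hM.trans_le (hω.trans (le_abs_self _)))

theorem UniformIntegrable.exists_setIntegral_abs_gt_lt {ι : Type*} {f : ι → Ω → ℝ}
    (hf : UniformIntegrable f 1 μ) (hfm : ∀ i, StronglyMeasurable (f i)) {ε : ℝ} (hε : 0 < ε) :
    ∃ M : ℝ, ∀ i, ∫ ω in {ω | M < |f i ω|}, |f i ω| ∂μ < ε := by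
  obtain ⟨C, hC⟩ := hf.spec one_ne_zero ENNReal.one_ne_top (half_pos hε)
  refine ⟨C, fun i => ?_⟩
  set A := {ω | C ≤ ‖f i ω‖₊}
  have hA : MeasurableSet A := measurableSet_le measurable_const (hfm i).nnnorm.measurable
  calc ∫ ω in {ω | (C : ℝ) < |f i ω|}, |f i ω| ∂μ ≤ ∫ ω in A, |f i ω| ∂μ :=
        setIntegral_mono_set (memLp_one_iff_integrable.1 (hf.memLp i)).abs.integrableOn
          (.of_forall fun _ => abs_nonneg _)
          (.of_forall fun _ hω => (show (C : ℝ) ≤ |_| from le_of_lt hω))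
    _ = (eLpNorm (A.indicator (f i)) 1 μ).toReal := by
        simp_rw [← Real.norm_eq_abs]
        rw [integral_norm_eq_lintegral_enorm (hfm i).aestronglyMeasurable.restrict,
          eLpNorm_indicator_eq_eLpNorm_restrict hA, eLpNorm_one_eq_lintegral_enorm]
    _ ≤ ε / 2 := ENNReal.toReal_le_of_le_ofReal (half_pos hε).le (hC i)
    _ < ε := half_lt_self hε

theorem Integrable.exists_setIntegral_abs_condExp_gt_lt [IsFiniteMeasure μ] {g : Ω → ℝ}
    (hg : Integrable g μ) {ε : ℝ} (hε : 0 < ε) :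
    ∃ M : ℝ, ∀ m ≤ m0, ∫ ω in {ω | M < |μ[g|m] ω|}, |μ[g|m] ω| ∂μ < ε := by
  obtain ⟨M, hM⟩ := (hg.uniformIntegrable_condExp (ℱ := fun m : {m // m ≤ m0} => m.1)
    fun m => m.2).exists_setIntegral_abs_gt_lt
    (fun m => stronglyMeasurable_condExp.mono m.2) hε
  exact ⟨M, fun m hm => hM ⟨m, hm⟩⟩

theorem ae_eq_condExp_of_condExp_eq_add_mul (hm : m ≤ m0) [SigmaFinite (μ.trim hm)]
    {X Z W : Ω → ℝ} {a b : ℝ} (hb : b ≠ 0) (hZ : Integrable Z μ) (hW : Integrable W μ)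
    (hWm : StronglyMeasurable[m] W) (h : μ[Z|m] =ᵐ[μ] fun ω => a * W ω + b * X ω) :
    X =ᵐ[μ] μ[fun ω => b⁻¹ * (Z ω - a * W ω)|m] := by
  have hsmul : μ[fun ω => b⁻¹ * (Z ω - a * W ω)|m] =ᵐ[μ] b⁻¹ • μ[Z - a • W|m] :=
    condExp_smul b⁻¹ (Z - a • W) m
  have hsub : μ[Z - a • W|m] =ᵐ[μ] μ[Z|m] - μ[a • W|m] := condExp_sub hZ (hW.smul a) m
  have hpull : μ[a • W|m] = a • W :=
    condExp_of_stronglyMeasurable hm (hWm.const_smul a) (hW.smul a)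
  filter_upwards [h, hsmul, hsub] with ω hZω hsmulω hsubω
  rw [hsmulω, Pi.smul_apply, hsubω, Pi.sub_apply, hpull, hZω, Pi.smul_apply, smul_eq_mul,
    smul_eq_mul]
  field_simp
  ring

theorem abs_le_condExp_of_condExp_eq_add_mul (hm : m ≤ m0) [SigmaFinite (μ.trim hm)]
    {X Z W g : Ω → ℝ} {a b : ℝ} (hb : b ≠ 0) (hZ : Integrable Z μ) (hW : Integrable W μ)
    (hWm : StronglyMeasurable[m] W) (hg : Integrable g μ)
    (h : μ[Z|m] =ᵐ[μ] fun ω => a * W ω + b * X ω)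
    (hZWg : ∀ ω, |b⁻¹ * (Z ω - a * W ω)| ≤ g ω) :
    ∀ᵐ ω ∂μ, |X ω| ≤ μ[g|m] ω := by
  have hV : Integrable (fun ω => b⁻¹ * (Z ω - a * W ω)) μ :=
    (hZ.sub (hW.const_mul a)).const_mul _
  filter_upwards [ae_eq_condExp_of_condExp_eq_add_mul hm hb hZ hW hWm h,
    abs_condExp_ae_le_condExp_abs (m := m) (μ := μ) fun ω => b⁻¹ * (Z ω - a * W ω),
    condExp_mono (m := m) hV.abs hg (.of_forall hZWg)] with ω hXω habsω hmonoω
  rw [hXω]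
  exact habsω.trans hmonoω

theorem abs_le_condExp_of_harness_left (hm : m ≤ m0) [SigmaFinite (μ.trim hm)]
    {Xs Xt Xu g : Ω → ℝ} {s t u c : ℝ} (hst : s < t) (htu : t < u) (hc : u - s ≤ c * (u - t))
    (ht : Integrable Xt μ) (hu : Integrable Xu μ) (hum : StronglyMeasurable[m] Xu)
    (hg : Integrable g μ) (hcg : ∀ ω, c * (|Xt ω| + |Xu ω|) ≤ g ω)
    (h : μ[Xt|m] =ᵐ[μ] fun ω => (t - s) / (u - s) * Xu ω + (u - t) / (u - s) * Xs ω) :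
    ∀ᵐ ω ∂μ, |Xs ω| ≤ μ[g|m] ω := by
  have hus : 0 < u - s := by linarith
  have hut : 0 < u - t := by linarith
  refine abs_le_condExp_of_condExp_eq_add_mul hm (by positivity) ht hu hum hg h fun ω => ?_
  have hsolve : ((u - t) / (u - s))⁻¹ * (Xt ω - (t - s) / (u - s) * Xu ω)
      = (u - s) / (u - t) * Xt ω - (t - s) / (u - t) * Xu ω := by
    field_simp
  have hcs : (u - s) / (u - t) ≤ c := (div_le_iff₀ hut).2 hc
  have hct : (t - s) / (u - t) ≤ c := (div_le_iff₀ hut).2 (by linarith)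
  calc |((u - t) / (u - s))⁻¹ * (Xt ω - (t - s) / (u - s) * Xu ω)|
      ≤ (u - s) / (u - t) * |Xt ω| + (t - s) / (u - t) * |Xu ω| := by
        rw [hsolve]
        refine (abs_sub _ _).trans_eq ?_
        rw [abs_mul, abs_mul, abs_of_pos (div_pos hus hut),
          abs_of_pos (div_pos (sub_pos.2 hst) hut)]
    _ ≤ c * |Xt ω| + c * |Xu ω| := by gcongr
    _ ≤ g ω := by linarith [hcg ω]

theorem abs_le_condExp_of_harness_right (hm : m ≤ m0) [SigmaFinite (μ.trim hm)]
    {Xs Xt Xu g : Ω → ℝ} {s t u c : ℝ} (hst : s < t) (htu : t < u) (hc : u - s ≤ c * (t - s))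
    (ht : Integrable Xt μ) (hs : Integrable Xs μ) (hsm : StronglyMeasurable[m] Xs)
    (hg : Integrable g μ) (hcg : ∀ ω, c * (|Xt ω| + |Xs ω|) ≤ g ω)
    (h : μ[Xt|m] =ᵐ[μ] fun ω => (t - s) / (u - s) * Xu ω + (u - t) / (u - s) * Xs ω) :
    ∀ᵐ ω ∂μ, |Xu ω| ≤ μ[g|m] ω :=
  -- time reversal `r ↦ -r` exchanges the two endpoints
  abs_le_condExp_of_harness_left (s := -u) (t := -t) (u := -s) hm (by linarith) (by linarith)
    (by linarith) ht hs hsm hg hcg (h.trans (.of_forall fun _ => by ring))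

end MeasureTheory

theorem harness_uniformly_integrable_general
    {Ω : Type*} [mΩ : MeasurableSpace Ω] (P : Measure Ω) [IsProbabilityMeasure P]
    (Y : ℝ → Ω → ℝ)
    (hint : ∀ t ∈ Set.Icc (0 : ℝ) 1, Integrable (Y t) P)
    (ℱ : ℝ → ℝ → MeasurableSpace Ω)
    (hle : ∀ s u, ℱ s u ≤ mΩ)
    (hadapt : ∀ s ∈ Set.Icc (0 : ℝ) 1, ∀ u ∈ Set.Icc (0 : ℝ) 1, s < u →
      ∀ r ∈ Set.Icc (0 : ℝ) 1, (r ≤ s ∨ u ≤ r) → Measurable[ℱ s u] (Y r))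
    (hharness : ∀ s ∈ Set.Icc (0 : ℝ) 1, ∀ t ∈ Set.Icc (0 : ℝ) 1,
      ∀ u ∈ Set.Icc (0 : ℝ) 1, s < t → t < u →
        P[Y t | ℱ s u]
          =ᵐ[P] fun ω => ((t - s) / (u - s)) * Y u ω + ((u - t) / (u - s)) * Y s ω) :
    ∀ ε > (0 : ℝ), ∃ M : ℝ, ∀ s ∈ Set.Icc (0 : ℝ) 1,
      ∫ ω in {ω | M < |Y s ω|}, |Y s ω| ∂P < ε := by
  intro ε hε
  have h0 : (0 : ℝ) ∈ Set.Icc (0 : ℝ) 1 := by norm_num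
  have h14 : (1 / 4 : ℝ) ∈ Set.Icc (0 : ℝ) 1 := by norm_num
  have h34 : (3 / 4 : ℝ) ∈ Set.Icc (0 : ℝ) 1 := by norm_num
  have h1 : (1 : ℝ) ∈ Set.Icc (0 : ℝ) 1 := by norm_num
  set g : Ω → ℝ := fun ω => 4 * (|Y 0 ω| + |Y (1 / 4) ω| + |Y (3 / 4) ω| + |Y 1 ω|)
  have hg : Integrable g P :=
    ((((hint 0 h0).abs.add (hint _ h14).abs).add (hint _ h34).abs).add (hint 1 h1).abs).const_mul 4
  obtain ⟨M, hM⟩ := hg.exists_setIntegral_abs_condExp_gt_lt hε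
  refine ⟨M, fun s hs => ?_⟩
  obtain ⟨m, hm, hdom⟩ : ∃ m ≤ mΩ, ∀ᵐ ω ∂P, |Y s ω| ≤ P[g|m] ω := by
    rcases lt_or_ge s (3 / 4) with hs34 | hs34
    · refine ⟨ℱ s 1, hle s 1, abs_le_condExp_of_harness_left (hle s 1) hs34 (by norm_num)
        (c := 4) (by linarith [hs.1]) (hint _ h34) (hint 1 h1)
        (hadapt s hs 1 h1 (by linarith) 1 h1 (Or.inr le_rfl)).stronglyMeasurable hg
        (fun ω => ?_) (hharness s hs _ h34 1 h1 hs34 (by norm_num))⟩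
      linarith [abs_nonneg (Y 0 ω), abs_nonneg (Y (1 / 4) ω)]
    · refine ⟨ℱ 0 s, hle 0 s, abs_le_condExp_of_harness_right (hle 0 s) (by norm_num)
        (by linarith) (c := 4) (by linarith [hs.2]) (hint _ h14) (hint 0 h0)
        (hadapt 0 h0 s hs (by linarith) 0 h0 (Or.inl le_rfl)).stronglyMeasurable hg
        (fun ω => ?_) (hharness 0 h0 _ h14 s hs (by norm_num) (by linarith))⟩
      linarith [abs_nonneg (Y (3 / 4) ω), abs_nonneg (Y 1 ω)]
  exact (setIntegral_abs_gt_le_of_abs_le (hint s hs) integrable_condExp hdom M).trans_lt (hM m hm)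

/-- A harness `Y` on `[0,1]` (with respect to some past-future filtration) is uniformly
integrable: `sup_{s ∈ [0,1]} E[|Y s| 1_{|Y s| > M}] → 0` as `M → ∞`. -/
theorem harness_uniformly_integrable
    {Ω : Type*} [mΩ : MeasurableSpace Ω] (P : Measure Ω) [IsProbabilityMeasure P]
    (Y : ℝ → Ω → ℝ)
    (hint : ∀ t ∈ Set.Icc (0 : ℝ) 1, Integrable (Y t) P)
    (hrcll : ∀ᵐ ω ∂P,
      (∀ t ∈ Set.Ico (0 : ℝ) 1, Tendsto (fun s => Y s ω) (𝓝[>] t) (𝓝 (Y t ω))) ∧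
      (∀ t ∈ Set.Ioc (0 : ℝ) 1, ∃ L : ℝ, Tendsto (fun s => Y s ω) (𝓝[<] t) (𝓝 L)))
    (ℱ : ℝ → ℝ → MeasurableSpace Ω)
    (hle : ∀ s u, ℱ s u ≤ mΩ)
    (hadapt : ∀ s ∈ Set.Icc (0 : ℝ) 1, ∀ u ∈ Set.Icc (0 : ℝ) 1, s < u →
      ∀ r ∈ Set.Icc (0 : ℝ) 1, (r ≤ s ∨ u ≤ r) → Measurable[ℱ s u] (Y r))
    (hmono : ∀ s₁ ∈ Set.Icc (0 : ℝ) 1, ∀ s ∈ Set.Icc (0 : ℝ) 1,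
      ∀ u ∈ Set.Icc (0 : ℝ) 1, ∀ u₁ ∈ Set.Icc (0 : ℝ) 1, s₁ ≤ s → s < u → u ≤ u₁ →
      ℱ s₁ u₁ ≤ ℱ s u)
    (hharness : ∀ s ∈ Set.Icc (0 : ℝ) 1, ∀ t ∈ Set.Icc (0 : ℝ) 1,
      ∀ u ∈ Set.Icc (0 : ℝ) 1, s < t → t < u →
        P[Y t | ℱ s u]
          =ᵐ[P] fun ω => ((t - s) / (u - s)) * Y u ω + ((u - t) / (u - s)) * Y s ω) :
    ∀ ε > (0 : ℝ), ∃ M : ℝ, ∀ s ∈ Set.Icc (0 : ℝ) 1,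
      ∫ ω in {ω | M < |Y s ω|}, |Y s ω| ∂P < ε :=
  harness_uniformly_integrable_general (mΩ := mΩ) P Y hint ℱ hle hadapt hharness
end

section
/- If Y = (Y(t))_{t in [0,1]} is a harness with respect to some past-future filtration, then Y is continuous in probability; in fact, for every t in [0,1], P(lim_{s -> t} Y(s) = Y(t)) = 1, i.e., almost surely the left limit Y(t-) equals Y(t). -/
/-!
Fix `0 < t ≤ 1` and let `g` be the almost sure left limit of `Y` at `t`. For `s < c < r < t`
the harness property says that the slope of `Y` over `[s, r]` is the conditional expectation
given `ℱ s r` of its slope over `[s, c]`. These slopes are therefore uniformly integrable, so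
letting `r ↑ t` (Vitali, then the tower property) gives `E[g | ℱ s t] = Y t` for every `s < t`.
Along `q n ↑ t`, `g` is measurable for `⨆ n, ℱ (q n) t`, and Lévy's upward theorem turns
`E[g | ℱ (q n) t] = Y t` into `g = Y t` almost surely. Right continuity does the rest.
-/

open MeasureTheory Filter Topology

theorem continuousWithinAt_Icc_of_continuousWithinAt_Iio_Ioi {α β : Type*} [LinearOrder α]
    [TopologicalSpace α] [TopologicalSpace β] {f : α → β} {a b t : α}
    (ht : t ∈ Set.Icc a b) (hl : a < t → ContinuousWithinAt f (Set.Iio t) t)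
    (hr : t < b → ContinuousWithinAt f (Set.Ioi t) t) :
    ContinuousWithinAt f (Set.Icc a b) t := by
  rw [← Set.Icc_union_Icc_eq_Icc ht.1 ht.2]
  refine ContinuousWithinAt.union ?_ ?_
  · rcases ht.1.eq_or_lt with rfl | hat
    · simp
    · exact (continuousWithinAt_Iio_iff_Iic.1 (hl hat)).mono Set.Icc_subset_Iic_self
  · rcases ht.2.eq_or_lt with rfl | htb
    · simp
    · exact (continuousWithinAt_Ioi_iff_Ici.1 (hr htb)).mono Set.Icc_subset_Ici_self

namespace MeasureTheory

variable {α : Type*} {m m0 : MeasurableSpace α} {μ : Measure α} [IsFiniteMeasure μ]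

theorem integrable_and_condExp_ae_eq_of_uniformIntegrable {f : ℕ → α → ℝ} {g G : α → ℝ}
    (hui : UniformIntegrable f 1 μ) (hfg : ∀ᵐ x ∂μ, Tendsto (fun n => f n x) atTop (𝓝 (g x)))
    (hG : ∀ n, μ[f n | m] =ᵐ[μ] G) :
    Integrable g μ ∧ μ[g | m] =ᵐ[μ] G := by
  have hg : MemLp g 1 μ := hui.memLp_of_tendstoInMeasure (tendstoInMeasure_of_tendsto_ae hui.1 hfg)
  have hL1 : Tendsto (fun n => eLpNorm (f n - g) 1 μ) atTop (𝓝 0) :=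
    tendsto_Lp_finite_of_tendsto_ae le_rfl ENNReal.one_ne_top hui.1 hg hui.2.1 hfg
  have hbound : ∀ n, eLpNorm (μ[f 0 | m] - μ[g | m]) 1 μ ≤ eLpNorm (f n - g) 1 μ := fun n =>
    calc eLpNorm (μ[f 0 | m] - μ[g | m]) 1 μ = eLpNorm (μ[f n - g | m]) 1 μ :=
          eLpNorm_congr_ae (((hG 0).trans (hG n).symm).sub (EventuallyEq.refl _ _) |>.trans
            (condExp_sub ((hui.memLp n).integrable le_rfl) (hg.integrable le_rfl) m).symm)
      _ ≤ eLpNorm (f n - g) 1 μ := eLpNorm_condExp_le_eLpNorm _ le_rfl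
  have hzero : eLpNorm (μ[f 0 | m] - μ[g | m]) 1 μ = 0 :=
    le_antisymm (ge_of_tendsto' hL1 hbound) zero_le
  refine ⟨hg.integrable le_rfl, ?_⟩
  have hae := (eLpNorm_eq_zero_iff (integrable_condExp.sub integrable_condExp).1 one_ne_zero).1 hzero
  filter_upwards [hae, hG 0] with x hx hGx
  rw [← hGx]
  simpa [sub_eq_zero, eq_comm] using hx

theorem integrable_and_condExp_ae_eq_of_tendsto_condExp {ms : ℕ → MeasurableSpace α}
    (hms : ∀ n, ms n ≤ m0) (hm : ∀ n, m ≤ ms n) {X L : α → ℝ} (hX : Integrable X μ)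
    (hL : ∀ᵐ x ∂μ, Tendsto (fun n => μ[X | ms n] x) atTop (𝓝 (L x))) :
    Integrable L μ ∧ μ[L | m] =ᵐ[μ] μ[X | m] :=
  integrable_and_condExp_ae_eq_of_uniformIntegrable (hX.uniformIntegrable_condExp hms) hL
    fun n => condExp_condExp_of_le (hm n) (hms n)

theorem Integrable.ae_eq_of_forall_condExp_ae_eq {ℱ : Filtration ℕ m0} {g X : α → ℝ}
    (hg : Integrable g μ) (hgm : StronglyMeasurable[⨆ n, ℱ n] g)
    (hX : ∀ n, μ[g | ℱ n] =ᵐ[μ] X) : g =ᵐ[μ] X := by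
  filter_upwards [hg.tendsto_ae_condExp hgm, ae_all_iff.2 hX] with x hlim hx
  exact tendsto_nhds_unique hlim (tendsto_const_nhds.congr fun n => (hx n).symm)

end MeasureTheory

structure IsHarness {Ω : Type*} [mΩ : MeasurableSpace Ω] (P : Measure Ω) (Y : ℝ → Ω → ℝ)
    (ℱ : ℝ → ℝ → MeasurableSpace Ω) : Prop where
  integrable : ∀ t ∈ Set.Icc (0 : ℝ) 1, Integrable (Y t) P
  le : ∀ s u, ℱ s u ≤ mΩ
  measurable : ∀ s ∈ Set.Icc (0 : ℝ) 1, ∀ u ∈ Set.Icc (0 : ℝ) 1, s < u →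
    ∀ r ∈ Set.Icc (0 : ℝ) 1, (r ≤ s ∨ u ≤ r) → Measurable[ℱ s u] (Y r)
  mono : ∀ s₁ ∈ Set.Icc (0 : ℝ) 1, ∀ s ∈ Set.Icc (0 : ℝ) 1,
    ∀ u ∈ Set.Icc (0 : ℝ) 1, ∀ u₁ ∈ Set.Icc (0 : ℝ) 1, s₁ ≤ s → s < u → u ≤ u₁ →
    ℱ s₁ u₁ ≤ ℱ s u
  condExp_eq : ∀ s ∈ Set.Icc (0 : ℝ) 1, ∀ t ∈ Set.Icc (0 : ℝ) 1,
    ∀ u ∈ Set.Icc (0 : ℝ) 1, s < t → t < u →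
      P[Y t | ℱ s u] =ᵐ[P] fun ω => ((t - s) / (u - s)) * Y u ω + ((u - t) / (u - s)) * Y s ω

namespace IsHarness

variable {Ω : Type*} [MeasurableSpace Ω] {P : Measure Ω} [IsFiniteMeasure P]
  {Y : ℝ → Ω → ℝ} {ℱ : ℝ → ℝ → MeasurableSpace Ω}

theorem condExp_left (hY : IsHarness P Y ℱ) {s u : ℝ} (hs : s ∈ Set.Icc (0 : ℝ) 1)
    (hu : u ∈ Set.Icc (0 : ℝ) 1) (hsu : s < u) : P[Y s | ℱ s u] = Y s :=
  condExp_of_stronglyMeasurable (hY.le s u)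
    (hY.measurable s hs u hu hsu s hs (Or.inl le_rfl)).stronglyMeasurable (hY.integrable s hs)

theorem condExp_slope (hY : IsHarness P Y ℱ) {s c u : ℝ} (hs : s ∈ Set.Icc (0 : ℝ) 1)
    (hc : c ∈ Set.Icc (0 : ℝ) 1) (hu : u ∈ Set.Icc (0 : ℝ) 1) (hsc : s < c) (hcu : c < u) :
    P[fun ω => slope (Y · ω) s c | ℱ s u] =ᵐ[P] fun ω => slope (Y · ω) s u := by
  have hYs := hY.condExp_left hs hu (hsc.trans hcu)
  have hcs : c - s ≠ 0 := sub_ne_zero.2 hsc.ne'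
  have hus : u - s ≠ 0 := sub_ne_zero.2 (hsc.trans hcu).ne'
  have hsplit : (fun ω => slope (Y · ω) s c) = (c - s)⁻¹ • (Y c - Y s) := by
    ext ω; simp [slope_def_field, div_eq_inv_mul]
  rw [hsplit]
  filter_upwards [condExp_smul (μ := P) (m := ℱ s u) (c - s)⁻¹ (Y c - Y s),
    condExp_sub (m := ℱ s u) (hY.integrable c hc) (hY.integrable s hs),
    hY.condExp_eq s hs c hc u hu hsc hcu] with ω h₁ h₂ h₃
  simp only [h₁, Pi.smul_apply, h₂, Pi.sub_apply, h₃, hYs, slope_def_field, smul_eq_mul]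
  field_simp
  ring

theorem integrable_and_condExp_ae_eq_of_tendsto_nhdsLT (hY : IsHarness P Y ℱ) {s t : ℝ}
    {g : Ω → ℝ} (hs : 0 ≤ s) (hst : s < t) (ht : t ≤ 1)
    (hg : ∀ᵐ ω ∂P, Tendsto (Y · ω) (𝓝[<] t) (𝓝 (g ω))) :
    Integrable g P ∧ P[g | ℱ s t] =ᵐ[P] Y t := by
  have hsI : s ∈ Set.Icc (0 : ℝ) 1 := ⟨hs, hst.le.trans ht⟩
  have htI : t ∈ Set.Icc (0 : ℝ) 1 := ⟨hs.trans hst.le, ht⟩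
  have hts : t - s ≠ 0 := sub_ne_zero.2 hst.ne'
  obtain ⟨c, hsc, hct⟩ := exists_between hst
  have hcI : c ∈ Set.Icc (0 : ℝ) 1 := ⟨hs.trans hsc.le, hct.le.trans ht⟩
  obtain ⟨r, -, hr, hrt⟩ := exists_seq_strictMono_tendsto' hct
  have hrI : ∀ n, r n ∈ Set.Icc (0 : ℝ) 1 :=
    fun n => ⟨hcI.1.trans (hr n).1.le, (hr n).2.le.trans ht⟩
  have hrt' : Tendsto r atTop (𝓝[<] t) :=
    tendsto_nhdsWithin_iff.2 ⟨hrt, Eventually.of_forall fun n => (hr n).2⟩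
  set L : Ω → ℝ := fun ω => (t - s)⁻¹ * (g ω - Y s ω)
  have hslope : ∀ᵐ ω ∂P, Tendsto (fun n => P[fun ω => slope (Y · ω) s c | ℱ s (r n)] ω) atTop
      (𝓝 (L ω)) := by
    filter_upwards [hg, ae_all_iff.2 fun n => hY.condExp_slope hsI hcI (hrI n) hsc (hr n).1]
      with ω hgω hω
    refine Tendsto.congr (fun n => (hω n).symm) ?_
    exact ((hrt.sub_const s).inv₀ hts).mul ((hgω.comp hrt').sub_const _)
  have hXint : Integrable (fun ω => slope (Y · ω) s c) P :=
    ((hY.integrable c hcI).sub (hY.integrable s hsI)).const_mul (c - s)⁻¹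
  obtain ⟨hLint, hLcond⟩ := integrable_and_condExp_ae_eq_of_tendsto_condExp (hY.le s <| r ·)
    (fun n => hY.mono s hsI s hsI (r n) (hrI n) t htI le_rfl (hsc.trans (hr n).1) (hr n).2.le)
    hXint hslope
  have hgL : g = Y s + (t - s) • L := by
    ext ω
    simp only [L, Pi.add_apply, Pi.smul_apply, smul_eq_mul]
    field_simp
    ring
  rw [hgL]
  refine ⟨(hY.integrable s hsI).add (hLint.const_mul (t - s)), ?_⟩
  filter_upwards [condExp_add (hY.integrable s hsI) (hLint.smul (t - s)) (ℱ s t),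
    condExp_smul (μ := P) (m := ℱ s t) (t - s) L, hLcond,
    hY.condExp_slope hsI hcI htI hsc hct] with ω h₁ h₂ h₃ h₄
  rw [h₁, Pi.add_apply, hY.condExp_left hsI htI hst, h₂, Pi.smul_apply, h₃, h₄,
    slope_def_field, smul_eq_mul]
  field_simp
  ring

theorem ae_tendsto_nhdsLT (hY : IsHarness P Y ℱ) {t : ℝ} (ht0 : 0 < t) (ht1 : t ≤ 1)
    (hlim : ∀ᵐ ω ∂P, ∃ L, Tendsto (Y · ω) (𝓝[<] t) (𝓝 L)) :
    ∀ᵐ ω ∂P, Tendsto (Y · ω) (𝓝[<] t) (𝓝 (Y t ω)) := by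
  have htI : t ∈ Set.Icc (0 : ℝ) 1 := ⟨ht0.le, ht1⟩
  obtain ⟨q, hq_mono, hq, hqt⟩ := exists_seq_strictMono_tendsto' ht0
  have hqI : ∀ n, q n ∈ Set.Icc (0 : ℝ) 1 := fun n => ⟨(hq n).1.le, (hq n).2.le.trans ht1⟩
  have hqt' : Tendsto q atTop (𝓝[<] t) :=
    tendsto_nhdsWithin_iff.2 ⟨hqt, Eventually.of_forall fun n => (hq n).2⟩
  let 𝒢 : Filtration ℕ ‹MeasurableSpace Ω› :=
    ⟨fun n => ℱ (q n) t, fun i j hij => hY.mono (q i) (hqI i) (q j) (hqI j) t htI t htI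
      (hq_mono.monotone hij) (hq j).2 le_rfl, fun n => hY.le _ _⟩
  let g : Ω → ℝ := fun ω => limUnder atTop fun n => Y (q n) ω
  have hgm : StronglyMeasurable[⨆ n, 𝒢 n] g :=
    @StronglyMeasurable.limUnder _ _ _ (⨆ n, 𝒢 n) _ _ _ _ _ _ _ fun n =>
      ((hY.measurable (q n) (hqI n) t htI (hq n).2 (q n) (hqI n) (Or.inl le_rfl)).mono
        (le_iSup 𝒢 n) le_rfl).stronglyMeasurable
  have hg : ∀ᵐ ω ∂P, Tendsto (Y · ω) (𝓝[<] t) (𝓝 (g ω)) := by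
    filter_upwards [hlim] with ω ⟨L, hL⟩
    rwa [show g ω = L from (hL.comp hqt').limUnder_eq]
  have hcond : ∀ n, Integrable g P ∧ P[g | 𝒢 n] =ᵐ[P] Y t := fun n =>
    hY.integrable_and_condExp_ae_eq_of_tendsto_nhdsLT (hq n).1.le (hq n).2 ht1 hg
  filter_upwards [hg, (hcond 0).1.ae_eq_of_forall_condExp_ae_eq hgm fun n => (hcond n).2]
    with ω hω hgY
  rwa [← hgY]

end IsHarness

/-- A harness `Y` on `[0,1]` (with respect to some past-future filtration) is continuous in
probability; in fact, for every `t ∈ [0,1]`, almost surely `lim_{s → t} Y s = Y t`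
(the limit being taken along `s ∈ [0,1]`), i.e. almost surely the left limit `Y(t-)`
equals `Y(t)`. -/
theorem harness_continuous_in_probability
    {Ω : Type*} [mΩ : MeasurableSpace Ω] (P : Measure Ω) [IsProbabilityMeasure P]
    (Y : ℝ → Ω → ℝ)
    (hint : ∀ t ∈ Set.Icc (0 : ℝ) 1, Integrable (Y t) P)
    (hrcll : ∀ᵐ ω ∂P,
      (∀ t ∈ Set.Ico (0 : ℝ) 1, Tendsto (fun s => Y s ω) (𝓝[>] t) (𝓝 (Y t ω))) ∧
      (∀ t ∈ Set.Ioc (0 : ℝ) 1, ∃ L : ℝ, Tendsto (fun s => Y s ω) (𝓝[<] t) (𝓝 L)))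
    (ℱ : ℝ → ℝ → MeasurableSpace Ω)
    (hle : ∀ s u, ℱ s u ≤ mΩ)
    (hadapt : ∀ s ∈ Set.Icc (0 : ℝ) 1, ∀ u ∈ Set.Icc (0 : ℝ) 1, s < u →
      ∀ r ∈ Set.Icc (0 : ℝ) 1, (r ≤ s ∨ u ≤ r) → Measurable[ℱ s u] (Y r))
    (hmono : ∀ s₁ ∈ Set.Icc (0 : ℝ) 1, ∀ s ∈ Set.Icc (0 : ℝ) 1,
      ∀ u ∈ Set.Icc (0 : ℝ) 1, ∀ u₁ ∈ Set.Icc (0 : ℝ) 1, s₁ ≤ s → s < u → u ≤ u₁ →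
      ℱ s₁ u₁ ≤ ℱ s u)
    (hharness : ∀ s ∈ Set.Icc (0 : ℝ) 1, ∀ t ∈ Set.Icc (0 : ℝ) 1,
      ∀ u ∈ Set.Icc (0 : ℝ) 1, s < t → t < u →
        P[Y t | ℱ s u]
          =ᵐ[P] fun ω => ((t - s) / (u - s)) * Y u ω + ((u - t) / (u - s)) * Y s ω) :
    ∀ t ∈ Set.Icc (0 : ℝ) 1,
      (∀ᵐ ω ∂P, Tendsto (fun s => Y s ω) (𝓝[Set.Icc (0 : ℝ) 1] t) (𝓝 (Y t ω))) ∧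
      (t ≠ 0 → ∀ᵐ ω ∂P, Function.leftLim (fun s => Y s ω) t = Y t ω) := by
  have hY : IsHarness P Y ℱ := ⟨hint, hle, hadapt, hmono, hharness⟩
  intro t ht
  have hleft : 0 < t → ∀ᵐ ω ∂P, Tendsto (fun s => Y s ω) (𝓝[<] t) (𝓝 (Y t ω)) := fun ht0 =>
    hY.ae_tendsto_nhdsLT ht0 ht.2 (hrcll.mono fun ω hω => hω.2 t ⟨ht0, ht.2⟩)
  refine ⟨?_, fun ht0 => (hleft (ht.1.lt_of_ne' ht0)).mono fun ω hω => leftLim_eq_of_tendsto hω⟩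
  filter_upwards [hrcll, eventually_imp_distrib_left.2 hleft] with ω hω hωleft
  exact continuousWithinAt_Icc_of_continuousWithinAt_Iio_Ioi ht hωleft
    fun ht1 => hω.1 t ⟨ht.1, ht1⟩
end

section
/- Let Y = (Y(t))_{t in [0,1]} be a harness with respect to a past-future filtration (F_{t,T'}). Then for all s < t < T' in [0,1], almost surely E[Y(t-) | F_{s,T'}] = ((t - s)/(T' - s)) Y(T') + ((T' - t)/(T' - s)) Y(s) = E[Y(t) | F_{s,T'}], where Y(t-) is the almost sure left limit lim_{u up t} Y(u). -/
/-!
For `a < v < T'` the harness identity at `(a, v, T')` amounts to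
`E[g | ℱ a T'] = Y T' + (T' - t) (Y a - Y T') / (T' - a)`, where
`g := Y T' + (T' - t) (Y v - Y T') / (T' - v)`. Along `u n ↑ t` these are conditional expectations
of the fixed variable `g` for the increasing σ-algebras `ℱ (u n) T'`, so by Lévy's upward theorem
they converge a.s. to `E[g | ⨆ n, ℱ (u n) T']`, while by the existence of left limits they converge
to `Y(t-)`. The tower property then gives `E[Y(t-) | ℱ s T'] = E[g | ℱ s T']`, which is the
harness interpolation at `t`.
-/

open MeasureTheory Filter Topology

lemma tendsto_secant_leftLim {y : ℝ → ℝ} {t T L : ℝ} (htT : t ≠ T)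
    (hL : Tendsto y (𝓝[<] t) (𝓝 L)) {u : ℕ → ℝ} (hu : Tendsto u atTop (𝓝[<] t)) :
    Tendsto (fun n => y T + (T - t) / (T - u n) * (y (u n) - y T)) atTop
      (𝓝 (Function.leftLim y t)) := by
  rw [leftLim_eq_of_tendsto hL]
  have hTt : T - t ≠ 0 := sub_ne_zero.2 htT.symm
  have hratio : Tendsto (fun n => (T - t) / (T - u n)) atTop (𝓝 1) := by
    simpa [Pi.div_def, div_self hTt] using (tendsto_const_nhds (x := T - t)).div
      (tendsto_const_nhds.sub (tendsto_nhds_of_tendsto_nhdsWithin hu)) hTt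
  simpa using (tendsto_const_nhds (x := y T)).add
    (hratio.mul ((hL.comp hu).sub (tendsto_const_nhds (x := y T))))

section

variable {Ω : Type*} {mΩ : MeasurableSpace Ω} {P : Measure Ω} [IsFiniteMeasure P]

/-- Lévy's upward theorem combined with the tower property. -/
lemma condExp_ae_eq_condExp_of_tendsto_condExp (G : Filtration ℕ mΩ)
    {m : MeasurableSpace Ω} (hm : m ≤ ⨆ n, G n) (f : Ω → ℝ) {X : ℕ → Ω → ℝ} {Z : Ω → ℝ}
    (hX : ∀ n, P[f | G n] =ᵐ[P] X n)
    (hXZ : ∀ᵐ ω ∂P, Tendsto (fun n => X n ω) atTop (𝓝 (Z ω))) :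
    P[Z | m] =ᵐ[P] P[f | m] := by
  have hZ : Z =ᵐ[P] P[f | ⨆ n, G n] := by
    filter_upwards [ae_all_iff.2 hX, hXZ, tendsto_ae_condExp (μ := P) (ℱ := G) f]
      with ω hXω hZω hlevy
    exact tendsto_nhds_unique hZω (hlevy.congr hXω)
  exact (condExp_congr_ae hZ).trans (condExp_condExp_of_le hm (iSup_le G.le))

lemma condExp_secant_of_harness {m : MeasurableSpace Ω} (hm : m ≤ mΩ) {Ya Yv YT : Ω → ℝ}
    {a v T : ℝ} (ha : a ≠ T) (hv : v ≠ T) (c : ℝ) (hYv : Integrable Yv P)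
    (hYT : Integrable YT P) (hYTm : StronglyMeasurable[m] YT)
    (hharness : P[Yv | m] =ᵐ[P] fun ω => ((v - a) / (T - a)) * YT ω + ((T - v) / (T - a)) * Ya ω) :
    P[fun ω => YT ω + c / (T - v) * (Yv ω - YT ω) | m]
      =ᵐ[P] fun ω => YT ω + c / (T - a) * (Ya ω - YT ω) := by
  have hlin : P[YT + (c / (T - v)) • (Yv - YT) | m]
      =ᵐ[P] P[YT | m] + (c / (T - v)) • (P[Yv | m] - P[YT | m]) :=
    (condExp_add hYT ((hYv.sub hYT).smul _) m).trans
      (EventuallyEq.rfl.add ((condExp_smul _ _ m).trans ((condExp_sub hYv hYT m).const_smul _)))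
  rw [condExp_of_stronglyMeasurable hm hYTm hYT] at hlin
  refine hlin.trans ?_
  filter_upwards [hharness] with ω hYvω
  simp only [Pi.add_apply, Pi.smul_apply, Pi.sub_apply, smul_eq_mul, hYvω]
  field_simp [sub_ne_zero.2 ha.symm, sub_ne_zero.2 hv.symm]
  ring

end

/-- For a harness `Y` on `[0,1]` with respect to a past-future filtration `ℱ`, for all
`s < t < T'` in `[0,1]`, almost surely
`E[Y(t-) | ℱ s T'] = ((t-s)/(T'-s)) Y(T') + ((T'-t)/(T'-s)) Y(s) = E[Y t | ℱ s T']`,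
where `Y(t-)` is the a.s. left limit of `Y` at `t`. -/
theorem harness_condexp_leftLim
    {Ω : Type*} [mΩ : MeasurableSpace Ω] (P : Measure Ω) [IsProbabilityMeasure P]
    (Y : ℝ → Ω → ℝ)
    (hint : ∀ t ∈ Set.Icc (0 : ℝ) 1, Integrable (Y t) P)
    (hrcll : ∀ᵐ ω ∂P,
      (∀ t ∈ Set.Ico (0 : ℝ) 1, Tendsto (fun s => Y s ω) (𝓝[>] t) (𝓝 (Y t ω))) ∧
      (∀ t ∈ Set.Ioc (0 : ℝ) 1, ∃ L : ℝ, Tendsto (fun s => Y s ω) (𝓝[<] t) (𝓝 L)))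
    (ℱ : ℝ → ℝ → MeasurableSpace Ω)
    (hle : ∀ s u, ℱ s u ≤ mΩ)
    (hadapt : ∀ s ∈ Set.Icc (0 : ℝ) 1, ∀ u ∈ Set.Icc (0 : ℝ) 1, s < u →
      ∀ r ∈ Set.Icc (0 : ℝ) 1, (r ≤ s ∨ u ≤ r) → Measurable[ℱ s u] (Y r))
    (hmono : ∀ s₁ ∈ Set.Icc (0 : ℝ) 1, ∀ s ∈ Set.Icc (0 : ℝ) 1,
      ∀ u ∈ Set.Icc (0 : ℝ) 1, ∀ u₁ ∈ Set.Icc (0 : ℝ) 1, s₁ ≤ s → s < u → u ≤ u₁ →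
      ℱ s₁ u₁ ≤ ℱ s u)
    (hharness : ∀ s ∈ Set.Icc (0 : ℝ) 1, ∀ t ∈ Set.Icc (0 : ℝ) 1,
      ∀ u ∈ Set.Icc (0 : ℝ) 1, s < t → t < u →
        P[Y t | ℱ s u]
          =ᵐ[P] fun ω => ((t - s) / (u - s)) * Y u ω + ((u - t) / (u - s)) * Y s ω) :
    ∀ s ∈ Set.Icc (0 : ℝ) 1, ∀ t ∈ Set.Icc (0 : ℝ) 1, ∀ T' ∈ Set.Icc (0 : ℝ) 1,
      s < t → t < T' →
      (P[(fun ω => Function.leftLim (fun r => Y r ω) t) | ℱ s T']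
          =ᵐ[P] fun ω => ((t - s) / (T' - s)) * Y T' ω + ((T' - t) / (T' - s)) * Y s ω) ∧
      (P[(fun ω => Function.leftLim (fun r => Y r ω) t) | ℱ s T']
          =ᵐ[P] P[Y t | ℱ s T']) := by
  intro s hs t ht T' hT' hst htT'
  have hI : ∀ {a}, s ≤ a → a < T' → a ∈ Set.Icc (0 : ℝ) 1 :=
    fun hsa haT => ⟨hs.1.trans hsa, haT.le.trans hT'.2⟩
  obtain ⟨v, htv, hvT⟩ := exists_between htT'
  have hv : v ∈ Set.Icc (0 : ℝ) 1 := hI (hst.trans htv).le hvT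
  have hclosed : ∀ a, s ≤ a → a < t →
      P[fun ω => Y T' ω + (T' - t) / (T' - v) * (Y v ω - Y T' ω) | ℱ a T']
        =ᵐ[P] fun ω => Y T' ω + (T' - t) / (T' - a) * (Y a ω - Y T' ω) := fun a hsa hat =>
    have haT := hat.trans htT'
    condExp_secant_of_harness (hle a T') haT.ne hvT.ne _ (hint v hv) (hint T' hT')
      (hadapt a (hI hsa haT) T' hT' haT T' hT' (Or.inr le_rfl)).stronglyMeasurable
      (hharness a (hI hsa haT) v hv T' hT' (hat.trans htv) hvT)
  obtain ⟨u, hu_mono, hu_mem, hu_lim⟩ := exists_seq_strictMono_tendsto' hst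
  have huT : ∀ n, u n < T' := fun n => (hu_mem n).2.trans htT'
  have huI : ∀ n, u n ∈ Set.Icc (0 : ℝ) 1 := fun n => hI (hu_mem n).1.le (huT n)
  let G : Filtration ℕ mΩ :=
    { seq := fun n => ℱ (u n) T'
      mono' := fun n k hnk =>
        hmono _ (huI n) _ (huI k) T' hT' T' hT' (hu_mono.monotone hnk) (huT k) le_rfl
      le' := fun n => hle _ _ }
  have hsG : ℱ s T' ≤ ⨆ n, G n :=
    le_iSup_of_le 0 (hmono s hs _ (huI 0) T' hT' T' hT' (hu_mem 0).1.le (huT 0) le_rfl)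
  have hleftLim : P[fun ω => Function.leftLim (fun r => Y r ω) t | ℱ s T']
      =ᵐ[P] P[fun ω => Y T' ω + (T' - t) / (T' - v) * (Y v ω - Y T' ω) | ℱ s T'] := by
    refine condExp_ae_eq_condExp_of_tendsto_condExp G hsG _
      (fun n => hclosed (u n) (hu_mem n).1.le (hu_mem n).2) ?_
    filter_upwards [hrcll] with ω hω
    obtain ⟨L, hL⟩ := hω.2 t ⟨hs.1.trans_lt hst, ht.2⟩
    exact tendsto_secant_leftLim htT'.ne hL <|
      tendsto_nhdsWithin_of_tendsto_nhds_of_eventually_within u hu_lim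
        (Eventually.of_forall fun n => (hu_mem n).2)
  have hformula : P[fun ω => Function.leftLim (fun r => Y r ω) t | ℱ s T']
      =ᵐ[P] fun ω => ((t - s) / (T' - s)) * Y T' ω + ((T' - t) / (T' - s)) * Y s ω := by
    filter_upwards [hleftLim.trans (hclosed s le_rfl hst)] with ω hω
    rw [hω]
    field_simp [(sub_pos.2 (hst.trans htT')).ne']
    ring
  exact ⟨hformula, hformula.trans (hharness s hs t ht T' hT' hst htT').symm⟩
end

section
/- Let G be a finite time-like graph, sigma* a full time path of G, and t* a point in the interior of an edge E_{j*k*} of G such that sigma* is a support for t*. Define W_1 = {t_{j*}, t_{k*}} and let G_1 be G with the edge E_{j*k*} removed; inductively, for a vertex t_i in W_m, its descendant set N(t_i) equals {t_i} if t_i is a vertex of sigma*, and otherwise equals the set of the two neighbors of t_i in G_m; set W_{m+1} equal to the union of N(t_i) over t_i in W_m, and let G_{m+1} be obtained from G_m by deleting all vertices of W_m not in W_{m+1} together with all their incident edges. Then for every m: (i) no vertex of W_m that is not a vertex of sigma* has a neighbor in G_m that also lies in W_m; and (ii) every vertex of W_{m+1} that is not a vertex of sigma* has exactly two neighbors in the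 graph G_{m+1}. -/
namespace TLG

variable (G : TLG)

/-- `v` is a vertex of the path `l`. -/
def onPath (l : List G.Edge) (v : Fin (G.N + 1)) : Prop :=
  ∃ e ∈ l, e.1.1 = v ∨ e.1.2 = v

/-- A walk in `G` (consecutive vertices joined by an edge of `G`, not necessarily
increasing) all of whose vertices lie in the set `S`. -/
def IsWalkIn (S : Set (Fin (G.N + 1))) (l : List (Fin (G.N + 1))) : Prop :=
  l ≠ [] ∧ (∀ x ∈ l, x ∈ S) ∧
    l.Chain' fun u w => ∃ e ∈ G.edges, (e.1.1 = u ∧ e.1.2 = w) ∨ (e.1.1 = w ∧ e.1.2 = u)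

/-- The vertex set `V*` of the subgraph `G*` determined by a full time path `σ*` and an
edge `e* = E_{j*k*}`: all vertices admitting a walk to `j*` or `k*` containing no vertex
of `σ*`. -/
def suppVstar (σstar : List G.Edge) (estar : G.Edge) : Set (Fin (G.N + 1)) :=
  {v | ∃ l : List (Fin (G.N + 1)), G.IsWalkIn {x | ¬ G.onPath σstar x} l ∧
    l.head? = some v ∧ (l.getLast? = some estar.1.1 ∨ l.getLast? = some estar.1.2)}

/-- The edge set `E*` of the subgraph `G*`: all edges of `G` with both endpoints in `V*`. -/
def suppEstar (σstar : List G.Edge) (estar : G.Edge) : Set G.Edge :=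
  {e | e ∈ G.edges ∧ e.1.1 ∈ G.suppVstar σstar estar ∧ e.1.2 ∈ G.suppVstar σstar estar}

/-- The full time path `σ*` is a support for (a point in the interior of) the edge `e*` if
the subgraph `G* = (V*, E*)` is a tree, i.e. it is connected and (being a connected finite
multigraph) has exactly one fewer edge than vertices, which is equivalent to acyclicity. -/
def IsSupport (σstar : List G.Edge) (estar : G.Edge) : Prop :=
  G.IsFullTimePath σstar ∧ estar ∈ G.edges ∧
    (∀ u ∈ G.suppVstar σstar estar, ∀ v ∈ G.suppVstar σstar estar,
      ∃ l : List (Fin (G.N + 1)), G.IsWalkIn (G.suppVstar σstar estar) l ∧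
        l.head? = some u ∧ l.getLast? = some v) ∧
    (G.suppEstar σstar estar).ncard + 1 = (G.suppVstar σstar estar).ncard

open Classical in
/-- The neighbors of the vertex `v` with respect to the edge set `E`. -/
noncomputable def nbrs (E : Finset G.Edge) (v : Fin (G.N + 1)) : Finset (Fin (G.N + 1)) :=
  Finset.univ.filter fun w => ∃ e ∈ E, (e.1.1 = v ∧ e.1.2 = w) ∨ (e.1.1 = w ∧ e.1.2 = v)

open Classical in
/-- The set of descendants of a vertex `v ∈ W_m`, relative to the current edge set `E`:
`{v}` itself if `v` is a vertex of `σ*`, and otherwise the neighbors of `v` in `E`. -/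
noncomputable def descend (σstar : List G.Edge) (E : Finset G.Edge) (v : Fin (G.N + 1)) :
    Finset (Fin (G.N + 1)) :=
  if G.onPath σstar v then {v} else G.nbrs E v

/-- The inductive construction of the pairs `(W_m, G_m)`, `m ≥ 1` (indexed here so that
`suppWE σ* e* m` is the pair `(W_{m+1}, G_{m+1})`, with `G_m` recorded via its edge set):
`W_1 = {j*, k*}` and `G_1 = G - e*`; `W_{m+1}` is the union of the descendants of the
vertices of `W_m`, and `G_{m+1}` is `G_m` with all vertices of `W_m` not in `W_{m+1}`,
and all their incident edges, deleted. -/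
noncomputable def suppWE (σstar : List G.Edge) (estar : G.Edge) :
    ℕ → Finset (Fin (G.N + 1)) × Finset G.Edge
  | 0 => ({estar.1.1, estar.1.2}, G.edges.erase estar)
  | m + 1 =>
    let p := suppWE σstar estar m
    let W' := p.1.biUnion (G.descend σstar p.2)
    (W', p.2.filter fun e => ∀ v ∈ p.1, v ∉ W' → e.1.1 ≠ v ∧ e.1.2 ≠ v)

end TLG

namespace TLG

section Edges

variable (G : TLG)

def Joins (f : G.Edge) (u v : Fin (G.N + 1)) : Prop :=
  (f.1.1 = u ∧ f.1.2 = v) ∨ (f.1.1 = v ∧ f.1.2 = u)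

def otherEnd (v : Fin (G.N + 1)) (f : G.Edge) : Fin (G.N + 1) :=
  if f.1.1 = v then f.1.2 else f.1.1

variable {G} {f : G.Edge} {u v w p : Fin (G.N + 1)}

theorem Joins.symm (h : G.Joins f u v) : G.Joins f v u := Or.symm h

theorem Joins.eq_or_eq {u' v' : Fin (G.N + 1)} (h : G.Joins f u v) (h' : G.Joins f u' v') :
    (u = u' ∧ v = v') ∨ (u = v' ∧ v = u') := by
  unfold Joins at h h'
  grind

theorem Joins.incident_iff (h : G.Joins f u v) : (f.1.1 = p ∨ f.1.2 = p) ↔ (p = u ∨ p = v) := by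
  unfold Joins at h
  grind

theorem Joins.incident_left (h : G.Joins f u v) : f.1.1 = u ∨ f.1.2 = u :=
  h.incident_iff.2 (Or.inl rfl)

theorem joins_otherEnd (h : f.1.1 = v ∨ f.1.2 = v) : G.Joins f v (G.otherEnd v f) := by
  unfold Joins otherEnd
  grind

theorem mem_nbrs {E : Finset G.Edge} : w ∈ G.nbrs E v ↔ ∃ f ∈ E, G.Joins f v w := by
  simp [nbrs, Joins]

theorem nbrs_eq_image (E : Finset G.Edge) (v : Fin (G.N + 1)) :
    G.nbrs E v = (E.filter fun f => f.1.1 = v ∨ f.1.2 = v).image (G.otherEnd v) := by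
  ext w
  simp only [mem_nbrs, Finset.mem_image, Finset.mem_filter]
  constructor
  · rintro ⟨f, hf, hfw⟩
    refine ⟨f, ⟨hf, hfw.incident_left⟩, ?_⟩
    unfold Joins at hfw
    unfold otherEnd
    grind
  · rintro ⟨f, ⟨hf, hfv⟩, rfl⟩
    exact ⟨f, hf, joins_otherEnd hfv⟩

theorem fst_ne_snd_of_mem_edges (hf : f ∈ G.edges) : f.1.1 ≠ f.1.2 :=
  fun h => (G.hedge f hf).ne (congrArg G.t h)

theorem card_incident_of_ne (h0 : v ≠ 0) (hl : v ≠ Fin.last G.N) :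
    (G.edges.filter fun f => f.1.1 = v ∨ f.1.2 = v).card = 3 := by
  simp [G.hdeg, h0, hl]

end Edges

section Path

variable {G : TLG} {σ : List G.Edge} {w : Fin (G.N + 1)}

theorem IsFullTimePath.fst_getElem_zero (hσ : G.IsFullTimePath σ) (h : 0 < σ.length) :
    σ[0].1.1 = 0 := by
  have := hσ.2.1
  simp_all [pathStart, List.head?_eq_getElem?]

theorem IsFullTimePath.snd_getElem_last (hσ : G.IsFullTimePath σ) (h : σ.length - 1 < σ.length) :
    σ[σ.length - 1].1.2 = Fin.last G.N := by
  have := hσ.2.2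
  simp_all [pathEnd, List.getLast?_eq_getElem?]

theorem IsFullTimePath.onPath_zero (hσ : G.IsFullTimePath σ) : G.onPath σ 0 := by
  obtain ⟨f, hf, hf0⟩ := Option.map_eq_some_iff.1 hσ.2.1
  exact ⟨f, List.mem_of_mem_head? hf, Or.inl hf0⟩

theorem IsFullTimePath.onPath_last (hσ : G.IsFullTimePath σ) : G.onPath σ (Fin.last G.N) := by
  obtain ⟨f, hf, hfl⟩ := Option.map_eq_some_iff.1 hσ.2.2
  exact ⟨f, List.mem_of_mem_getLast? hf, Or.inr hfl⟩

theorem IsFullTimePath.exists_in_out (hσ : G.IsFullTimePath σ) (hw : G.onPath σ w)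
    (h0 : w ≠ 0) (hl : w ≠ Fin.last G.N) : ∃ a ∈ σ, ∃ b ∈ σ, a.1.2 = w ∧ b.1.1 = w := by
  obtain ⟨f, hf, hfw⟩ := hw
  obtain ⟨i, hi, rfl⟩ := List.getElem_of_mem hf
  have hchain : ∀ j (hj : j + 1 < σ.length), σ[j].1.2 = σ[j + 1].1.1 :=
    List.IsChain.getElem (R := fun f g : G.Edge => f.1.2 = g.1.1) hσ.1.2.2
  rcases hfw with hw | hw
  · cases i with
    | zero => exact absurd (hw ▸ hσ.fst_getElem_zero hi) h0
    | succ j => exact ⟨σ[j], List.getElem_mem _, σ[j + 1], List.getElem_mem _, hchain j hi ▸ hw, hw⟩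
  · by_cases hi' : i + 1 < σ.length
    · exact ⟨σ[i], List.getElem_mem _, σ[i + 1], List.getElem_mem _, hw, hchain i hi' ▸ hw⟩
    · obtain rfl : i = σ.length - 1 := by omega
      exact absurd (hw ▸ hσ.snd_getElem_last hi) hl

/-- The degree of a vertex of a full time path exceeds by at most one the number of path edges
at it. -/
theorem IsFullTimePath.card_incident_not_mem_le_one (hσ : G.IsFullTimePath σ)
    (hw : G.onPath σ w) :
    ((G.edges.filter fun f => f.1.1 = w ∨ f.1.2 = w).filter (· ∉ σ)).card ≤ 1 := by
  by_cases hend : w = 0 ∨ w = Fin.last G.N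
  · exact (Finset.card_filter_le _ _).trans (by simp [G.hdeg, hend])
  rw [not_or] at hend
  obtain ⟨a, ha, b, hb, haw, hbw⟩ := hσ.exists_in_out hw hend.1 hend.2
  have hab : a ≠ b := by
    rintro rfl
    exact fst_ne_snd_of_mem_edges (hσ.1.2.1 a ha) (hbw.trans haw.symm)
  have hsub : (G.edges.filter fun f => f.1.1 = w ∨ f.1.2 = w).filter (· ∉ σ) ⊆
      ((G.edges.filter fun f => f.1.1 = w ∨ f.1.2 = w).erase a).erase b := by
    intro f hf
    simp only [Finset.mem_filter] at hf
    simp only [Finset.mem_erase, Finset.mem_filter]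
    exact ⟨fun h => hf.2 (h ▸ hb), fun h => hf.2 (h ▸ ha), hf.1⟩
  refine (Finset.card_le_card hsub).trans ?_
  rw [Finset.card_erase_of_mem (by simp [hab.symm, hσ.1.2.1 b hb, hbw]),
    Finset.card_erase_of_mem (by simp [hσ.1.2.1 a ha, haw]), card_incident_of_ne hend.1 hend.2]

theorem IsFullTimePath.eq_of_incident_of_not_mem (hσ : G.IsFullTimePath σ) (hw : G.onPath σ w)
    {f g : G.Edge} (hf : f ∈ G.edges) (hg : g ∈ G.edges) (hfw : f.1.1 = w ∨ f.1.2 = w)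
    (hgw : g.1.1 = w ∨ g.1.2 = w) (hfσ : f ∉ σ) (hgσ : g ∉ σ) : f = g :=
  Finset.card_le_one.1 (hσ.card_incident_not_mem_le_one hw) f (by simp [hf, hfw, hfσ])
    g (by simp [hg, hgw, hgσ])

end Path

section Tree

variable (G : TLG)

def roots (σ : List G.Edge) (e : G.Edge) : Set (Fin (G.N + 1)) :=
  {v | (v = e.1.1 ∨ v = e.1.2) ∧ ¬ G.onPath σ v}

def treeEdges (σ : List G.Edge) (e : G.Edge) : Set G.Edge := G.suppEstar σ e \ {e}

def ReachIn (σ : List G.Edge) (e : G.Edge) : ℕ → Fin (G.N + 1) → Prop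
  | 0, v => v ∈ G.roots σ e
  | n + 1, v => ∃ u, ReachIn σ e n u ∧ ∃ f ∈ G.treeEdges σ e, G.Joins f u v

/-- The distance in `G* - e*` from the roots; it is `0` (junk) off `V*`. -/
noncomputable def level (σ : List G.Edge) (e : G.Edge) (v : Fin (G.N + 1)) : ℕ :=
  sInf {n | G.ReachIn σ e n v}

open Classical in
noncomputable def parentEdge (σ : List G.Edge) (e : G.Edge) (v : Fin (G.N + 1)) : G.Edge :=
  if h : ∃ f ∈ G.treeEdges σ e, ∃ u, G.Joins f u v ∧ G.level σ e v = G.level σ e u + 1 then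
    h.choose
  else default

variable {G} {σ : List G.Edge} {e f : G.Edge} {u v w : Fin (G.N + 1)}

theorem not_onPath_of_mem_suppVstar (hv : v ∈ G.suppVstar σ e) : ¬ G.onPath σ v := by
  obtain ⟨l, ⟨-, hS, -⟩, hh, -⟩ := hv
  exact hS v (List.mem_of_mem_head? hh)

theorem mem_suppVstar_of_mem_roots (hv : v ∈ G.roots σ e) : v ∈ G.suppVstar σ e := by
  refine ⟨[v], ⟨List.cons_ne_nil _ _, by simpa using hv.2, List.isChain_singleton _⟩, rfl, ?_⟩
  rcases hv.1 with rfl | rfl <;> simp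

theorem mem_roots_of_joins (hv : v ∈ G.suppVstar σ e) (h : G.Joins e v w) : v ∈ G.roots σ e :=
  ⟨h.incident_left.imp Eq.symm Eq.symm, not_onPath_of_mem_suppVstar hv⟩

theorem mem_suppVstar_of_joins (hv : v ∈ G.suppVstar σ e) (hw : ¬ G.onPath σ w)
    (hf : f ∈ G.edges) (h : G.Joins f v w) : w ∈ G.suppVstar σ e := by
  obtain ⟨l, ⟨-, hS, hchain⟩, hh, hlast⟩ := hv
  obtain ⟨l, rfl⟩ := List.head?_eq_some_iff.1 hh
  refine ⟨w :: v :: l, ⟨List.cons_ne_nil _ _, ?_, ?_⟩, rfl, ?_⟩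
  · simpa [hw] using hS
  · exact List.isChain_cons_cons.2 ⟨⟨f, hf, h.symm⟩, hchain⟩
  · simpa only [List.getLast?_cons_cons] using hlast

theorem mem_treeEdges_of_joins (hf : f ∈ G.edges) (hfe : f ≠ e) (h : G.Joins f u v)
    (hu : u ∈ G.suppVstar σ e) (hv : v ∈ G.suppVstar σ e) : f ∈ G.treeEdges σ e := by
  refine ⟨⟨hf, ?_, ?_⟩, hfe⟩ <;> rcases h with ⟨rfl, rfl⟩ | ⟨rfl, rfl⟩ <;> assumption

theorem mem_suppVstar_of_mem_treeEdges (hf : f ∈ G.treeEdges σ e) (h : G.Joins f u v) :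
    u ∈ G.suppVstar σ e := by
  rcases h with ⟨rfl, -⟩ | ⟨-, rfl⟩
  exacts [hf.1.2.1, hf.1.2.2]

theorem exists_reachIn (hv : v ∈ G.suppVstar σ e) : ∃ n, G.ReachIn σ e n v := by
  obtain ⟨l, hl, hh, hlast⟩ := hv
  induction l generalizing v with
  | nil => simp at hh
  | cons a l ih =>
    obtain rfl : a = v := by simpa using hh
    cases l with
    | nil =>
      refine ⟨0, ?_, hl.2.1 a (by simp)⟩
      simpa using hlast
    | cons b l =>
      obtain ⟨⟨f, hf, hab⟩, hchain⟩ := List.isChain_cons_cons.1 hl.2.2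
      have hl' : G.IsWalkIn {x | ¬ G.onPath σ x} (b :: l) :=
        ⟨List.cons_ne_nil _ _, fun x hx => hl.2.1 x (List.mem_cons_of_mem _ hx), hchain⟩
      rw [List.getLast?_cons_cons] at hlast
      obtain ⟨n, hn⟩ := ih hl' rfl hlast
      by_cases hfe : f = e
      · subst hfe
        exact ⟨0, mem_roots_of_joins ⟨a :: b :: l, hl, rfl, by rwa [List.getLast?_cons_cons]⟩ hab⟩
      · refine ⟨n + 1, b, hn, f, mem_treeEdges_of_joins hf hfe hab.symm ⟨b :: l, hl', rfl, hlast⟩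
          ⟨a :: b :: l, hl, rfl, by rwa [List.getLast?_cons_cons]⟩, hab.symm⟩

theorem level_le {n : ℕ} (h : G.ReachIn σ e n v) : G.level σ e v ≤ n := Nat.sInf_le h

theorem reachIn_level (hv : v ∈ G.suppVstar σ e) : G.ReachIn σ e (G.level σ e v) v :=
  Nat.sInf_mem (exists_reachIn hv)

theorem level_eq_zero_iff (hv : v ∈ G.suppVstar σ e) : G.level σ e v = 0 ↔ v ∈ G.roots σ e :=
  ⟨fun h => by simpa only [h, ReachIn] using reachIn_level hv,
    fun h => Nat.le_zero.1 (level_le (n := 0) h)⟩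

theorem exists_parent {n : ℕ} (hv : v ∈ G.suppVstar σ e) (hn : G.level σ e v = n + 1) :
    ∃ u, G.level σ e u = n ∧ ∃ f ∈ G.treeEdges σ e, G.Joins f u v := by
  have h := reachIn_level hv
  rw [hn] at h
  obtain ⟨u, hu, f, hf, huv⟩ := h
  have hvu : G.level σ e v ≤ G.level σ e u + 1 :=
    level_le ⟨u, reachIn_level (mem_suppVstar_of_mem_treeEdges hf huv), f, hf, huv⟩
  exact ⟨u, le_antisymm (level_le hu) (by omega), f, hf, huv⟩

theorem parentEdge_spec (hv : v ∈ G.suppVstar σ e) (hvr : v ∉ G.roots σ e) :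
    G.parentEdge σ e v ∈ G.treeEdges σ e ∧
      ∃ u, G.Joins (G.parentEdge σ e v) u v ∧ G.level σ e v = G.level σ e u + 1 := by
  obtain ⟨n, hn⟩ := Nat.exists_eq_succ_of_ne_zero (mt (level_eq_zero_iff hv).1 hvr)
  obtain ⟨u, hu, f, hf, huv⟩ := exists_parent hv hn
  have h : ∃ f ∈ G.treeEdges σ e, ∃ u, G.Joins f u v ∧ G.level σ e v = G.level σ e u + 1 :=
    ⟨f, hf, u, huv, by omega⟩
  rw [parentEdge, dif_pos h]
  exact h.choose_spec

theorem injOn_parentEdge :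
    Set.InjOn (G.parentEdge σ e) (G.suppVstar σ e \ G.roots σ e) := by
  intro a ha b hb hab
  obtain ⟨-, ua, hua, hla⟩ := parentEdge_spec ha.1 ha.2
  obtain ⟨-, ub, hub, hlb⟩ := parentEdge_spec hb.1 hb.2
  rw [hab] at hua
  rcases hua.eq_or_eq hub with ⟨-, h⟩ | ⟨rfl, rfl⟩
  · exact h
  · omega

theorem IsSupport.not_onPath_both (hsupp : G.IsSupport σ e) :
    ¬ (G.onPath σ e.1.1 ∧ G.onPath σ e.1.2) := by
  rintro ⟨h1, h2⟩
  have hV : G.suppVstar σ e = ∅ := by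
    refine Set.eq_empty_of_forall_notMem ?_
    rintro v ⟨l, ⟨-, hS, -⟩, -, h | h⟩
    exacts [hS _ (List.mem_of_mem_getLast? h) h1, hS _ (List.mem_of_mem_getLast? h) h2]
  simpa [hV] using hsupp.2.2.2

theorem IsSupport.ncard_treeEdges (hsupp : G.IsSupport σ e) :
    (G.treeEdges σ e).ncard = (G.suppVstar σ e \ G.roots σ e).ncard := by
  have hcount := hsupp.2.2.2
  rw [Set.ncard_sdiff fun v hv => mem_suppVstar_of_mem_roots hv]
  by_cases h1 : G.onPath σ e.1.1 <;> by_cases h2 : G.onPath σ e.1.2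
  · exact absurd ⟨h1, h2⟩ hsupp.not_onPath_both
  · have hR : G.roots σ e = {e.1.2} := by
      ext v
      simp only [roots, Set.mem_ofPred_eq, Set.mem_singleton_iff]
      grind
    rw [treeEdges, Set.sdiff_singleton_eq_self fun h => not_onPath_of_mem_suppVstar h.2.1 h1,
      hR, Set.ncard_singleton]
    omega
  · have hR : G.roots σ e = {e.1.1} := by
      ext v
      simp only [roots, Set.mem_ofPred_eq, Set.mem_singleton_iff]
      grind
    rw [treeEdges, Set.sdiff_singleton_eq_self fun h => not_onPath_of_mem_suppVstar h.2.2 h2,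
      hR, Set.ncard_singleton]
    omega
  · have hR : G.roots σ e = {e.1.1, e.1.2} := by
      ext v
      simp only [roots, Set.mem_ofPred_eq, Set.mem_insert_iff, Set.mem_singleton_iff]
      grind
    have he : e ∈ G.suppEstar σ e := ⟨hsupp.2.1, mem_suppVstar_of_mem_roots ⟨Or.inl rfl, h1⟩,
      mem_suppVstar_of_mem_roots ⟨Or.inr rfl, h2⟩⟩
    rw [treeEdges, Set.ncard_sdiff_singleton_of_mem he, hR,
      Set.ncard_pair (fst_ne_snd_of_mem_edges hsupp.2.1)]
    omega

theorem IsSupport.surjOn_parentEdge (hsupp : G.IsSupport σ e) :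
    Set.SurjOn (G.parentEdge σ e) (G.suppVstar σ e \ G.roots σ e) (G.treeEdges σ e) := by
  have hsub : G.parentEdge σ e '' (G.suppVstar σ e \ G.roots σ e) ⊆ G.treeEdges σ e := by
    rintro _ ⟨v, hv, rfl⟩
    exact (parentEdge_spec hv.1 hv.2).1
  refine (Set.eq_of_subset_of_ncard_le hsub ?_).symm.subset
  rw [injOn_parentEdge.ncard_image, hsupp.ncard_treeEdges]

theorem IsSupport.treeEdge_eq_parentEdge (hsupp : G.IsSupport σ e) (hf : f ∈ G.treeEdges σ e)
    (h : G.Joins f u v) :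
    (f = G.parentEdge σ e v ∧ G.level σ e v = G.level σ e u + 1) ∨
      (f = G.parentEdge σ e u ∧ G.level σ e u = G.level σ e v + 1) := by
  obtain ⟨c, hc, rfl⟩ := hsupp.surjOn_parentEdge hf
  obtain ⟨-, u', hu', hc'⟩ := parentEdge_spec hc.1 hc.2
  rcases h.eq_or_eq hu' with ⟨rfl, rfl⟩ | ⟨rfl, rfl⟩
  exacts [Or.inl ⟨rfl, hc'⟩, Or.inr ⟨rfl, hc'⟩]

theorem IsSupport.eq_parentEdge_of_joins (hsupp : G.IsSupport σ e) (hv : v ∈ G.suppVstar σ e)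
    (hvr : v ∉ G.roots σ e) (hf : f ∈ G.edges) (h : G.Joins f v w) (hw : ¬ G.onPath σ w)
    (hfv : f ≠ G.parentEdge σ e v) :
    f = G.parentEdge σ e w ∧ G.level σ e w = G.level σ e v + 1 := by
  have hfe : f ≠ e := by
    rintro rfl
    exact hvr (mem_roots_of_joins hv h)
  have hf' := mem_treeEdges_of_joins hf hfe h hv (mem_suppVstar_of_joins hv hw hf h)
  exact (hsupp.treeEdge_eq_parentEdge hf' h).resolve_right fun h' => hfv h'.1

end Tree

section Construction

variable {G : TLG} {σ : List G.Edge} {e f : G.Edge} {v w x : Fin (G.N + 1)} {m : ℕ}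

theorem suppWE_snd_subset_edges (m : ℕ) : (G.suppWE σ e m).2 ⊆ G.edges := by
  induction m with
  | zero => exact Finset.erase_subset _ _
  | succ m ih => exact (Finset.filter_subset _ _).trans ih

theorem mem_suppWE_succ_fst : v ∈ (G.suppWE σ e (m + 1)).1 ↔
    ∃ x ∈ (G.suppWE σ e m).1, v ∈ G.descend σ (G.suppWE σ e m).2 x :=
  Finset.mem_biUnion

theorem mem_suppWE_succ_snd : f ∈ (G.suppWE σ e (m + 1)).2 ↔ f ∈ (G.suppWE σ e m).2 ∧
    ∀ x ∈ (G.suppWE σ e m).1, x ∉ (G.suppWE σ e (m + 1)).1 → f.1.1 ≠ x ∧ f.1.2 ≠ x :=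
  Finset.mem_filter

theorem descend_of_onPath (h : G.onPath σ v) (E : Finset G.Edge) : G.descend σ E v = {v} :=
  if_pos h

theorem descend_of_not_onPath (h : ¬ G.onPath σ v) (E : Finset G.Edge) :
    G.descend σ E v = G.nbrs E v :=
  if_neg h

variable (G) in
def WIsLevel (σ : List G.Edge) (e : G.Edge) (m : ℕ) : Prop :=
  ∀ v, v ∈ (G.suppWE σ e m).1 ∧ ¬ G.onPath σ v ↔ v ∈ G.suppVstar σ e ∧ G.level σ e v = m

variable (G) in
def EIsAboveLevel (σ : List G.Edge) (e : G.Edge) (m : ℕ) : Prop :=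
  ∀ f, f ∈ (G.suppWE σ e m).2 ↔ f ∈ G.edges ∧ f ≠ e ∧
    ∀ p ∈ G.suppVstar σ e, (f.1.1 = p ∨ f.1.2 = p) → m ≤ G.level σ e p

theorem wIsLevel_zero : G.WIsLevel σ e 0 := by
  intro v
  simp only [suppWE, Finset.mem_insert, Finset.mem_singleton]
  exact ⟨fun hv => ⟨mem_suppVstar_of_mem_roots hv, (level_eq_zero_iff
    (mem_suppVstar_of_mem_roots hv)).2 hv⟩, fun ⟨hv, hl⟩ => (level_eq_zero_iff hv).1 hl⟩

theorem eIsAboveLevel_zero : G.EIsAboveLevel σ e 0 := by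
  intro f
  simp [suppWE, and_comm]

theorem WIsLevel.succ (hsupp : G.IsSupport σ e) (hW : G.WIsLevel σ e m)
    (hE : G.EIsAboveLevel σ e m) : G.WIsLevel σ e (m + 1) := by
  intro v
  rw [mem_suppWE_succ_fst]
  constructor
  · rintro ⟨⟨x, hx, hvx⟩, hv⟩
    by_cases hxσ : G.onPath σ x
    · rw [descend_of_onPath hxσ, Finset.mem_singleton] at hvx
      exact absurd (hvx ▸ hxσ) hv
    rw [descend_of_not_onPath hxσ, mem_nbrs] at hvx
    obtain ⟨f, hf, hxv⟩ := hvx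
    obtain ⟨hxV, rfl⟩ := (hW x).1 ⟨hx, hxσ⟩
    obtain ⟨hfG, hfe, hlev⟩ := (hE f).1 hf
    have hvV := mem_suppVstar_of_joins hxV hv hfG hxv
    rcases hsupp.treeEdge_eq_parentEdge (mem_treeEdges_of_joins hfG hfe hxv hxV hvV) hxv with
      ⟨-, h⟩ | ⟨-, h⟩
    · exact ⟨hvV, h⟩
    · have := hlev v hvV hxv.symm.incident_left
      omega
  · rintro ⟨hvV, hl⟩
    obtain ⟨u, hu, f, hf, huv⟩ := exists_parent hvV hl
    obtain ⟨huW, huσ⟩ := (hW u).2 ⟨mem_suppVstar_of_mem_treeEdges hf huv, hu⟩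
    refine ⟨⟨u, huW, ?_⟩, not_onPath_of_mem_suppVstar hvV⟩
    rw [descend_of_not_onPath huσ, mem_nbrs]
    refine ⟨f, (hE f).2 ⟨hf.1.1, hf.2, fun p _ hp => ?_⟩, huv⟩
    rcases huv.incident_iff.1 hp with rfl | rfl <;> omega

theorem mem_suppWE_succ_iff_onPath (hW : G.WIsLevel σ e m) (hW' : G.WIsLevel σ e (m + 1))
    (hx : x ∈ (G.suppWE σ e m).1) : x ∈ (G.suppWE σ e (m + 1)).1 ↔ G.onPath σ x := by
  refine ⟨fun hx' => by_contra fun hxσ => ?_, fun hxσ =>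
    mem_suppWE_succ_fst.2 ⟨x, hx, by simp [descend_of_onPath hxσ]⟩⟩
  have h := ((hW x).1 ⟨hx, hxσ⟩).2
  have h' := ((hW' x).1 ⟨hx', hxσ⟩).2
  omega

theorem EIsAboveLevel.succ (hW : G.WIsLevel σ e m) (hW' : G.WIsLevel σ e (m + 1))
    (hE : G.EIsAboveLevel σ e m) : G.EIsAboveLevel σ e (m + 1) := by
  intro f
  rw [mem_suppWE_succ_snd, hE f]
  constructor
  · rintro ⟨⟨hf, hfe, hlev⟩, hkeep⟩
    refine ⟨hf, hfe, fun p hp hfp => (hlev p hp hfp).lt_of_ne fun hpm => ?_⟩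
    obtain ⟨hpW, hpσ⟩ := (hW p).2 ⟨hp, hpm.symm⟩
    have := hkeep p hpW (mt (mem_suppWE_succ_iff_onPath hW hW' hpW).1 hpσ)
    exact hfp.elim this.1 this.2
  · rintro ⟨hf, hfe, hlev⟩
    refine ⟨⟨hf, hfe, fun p hp hfp => Nat.le_of_succ_le (hlev p hp hfp)⟩, fun x hx hx' => ?_⟩
    have hxσ := mt (mem_suppWE_succ_iff_onPath hW hW' hx).2 hx'
    obtain ⟨hxV, hxl⟩ := (hW x).1 ⟨hx, hxσ⟩
    constructor <;> intro h
    · have := hlev x hxV (Or.inl h)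
      omega
    · have := hlev x hxV (Or.inr h)
      omega

theorem IsSupport.wIsLevel_and_eIsAboveLevel (hsupp : G.IsSupport σ e) (m : ℕ) :
    G.WIsLevel σ e m ∧ G.EIsAboveLevel σ e m := by
  induction m with
  | zero => exact ⟨wIsLevel_zero, eIsAboveLevel_zero⟩
  | succ m ih =>
    have hW' := ih.1.succ hsupp ih.2
    exact ⟨hW', ih.2.succ ih.1 hW'⟩

/-- The single edge off `σ*` at such a vertex leads to the vertex it was reached from, and is
deleted with it. -/
theorem IsSupport.mem_of_mem_suppWE_of_onPath (hsupp : G.IsSupport σ e) (m : ℕ)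
    (hw : w ∈ (G.suppWE σ e m).1) (hwσ : G.onPath σ w) (hf : f ∈ (G.suppWE σ e m).2)
    (hfw : f.1.1 = w ∨ f.1.2 = w) : f ∈ σ := by
  induction m generalizing w f with
  | zero =>
    simp only [suppWE, Finset.mem_insert, Finset.mem_singleton, Finset.mem_erase] at hw hf
    have heσ : e ∉ σ := fun he => hsupp.not_onPath_both ⟨⟨e, he, Or.inl rfl⟩, ⟨e, he, Or.inr rfl⟩⟩
    by_contra hfσ
    exact hf.1 (hsupp.1.eq_of_incident_of_not_mem hwσ hf.2 hsupp.2.1 hfw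
      (hw.imp Eq.symm Eq.symm) hfσ heσ)
  | succ m ih =>
    obtain ⟨hf', hkeep⟩ := mem_suppWE_succ_snd.1 hf
    obtain ⟨x, hx, hwx⟩ := mem_suppWE_succ_fst.1 hw
    by_cases hxσ : G.onPath σ x
    · rw [descend_of_onPath hxσ, Finset.mem_singleton] at hwx
      exact ih (hwx ▸ hx) hwσ hf' hfw
    rw [descend_of_not_onPath hxσ, mem_nbrs] at hwx
    obtain ⟨g, hg, hxw⟩ := hwx
    by_contra hfσ
    have hgσ : g ∉ σ := fun h => hxσ ⟨g, h, hxw.incident_left⟩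
    obtain rfl := hsupp.1.eq_of_incident_of_not_mem hwσ (suppWE_snd_subset_edges m hf')
      (suppWE_snd_subset_edges m hg) hfw hxw.symm.incident_left hfσ hgσ
    have hx' : x ∉ (G.suppWE σ e (m + 1)).1 := fun h => hxσ <|
      (mem_suppWE_succ_iff_onPath (hsupp.wIsLevel_and_eIsAboveLevel m).1
        (hsupp.wIsLevel_and_eIsAboveLevel (m + 1)).1 hx).1 h
    have hdel := hkeep x hx hx'
    exact hxw.incident_left.elim hdel.1 hdel.2

theorem IsSupport.not_joins_of_mem_suppWE (hsupp : G.IsSupport σ e) (m : ℕ)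
    (hv : v ∈ (G.suppWE σ e m).1) (hvσ : ¬ G.onPath σ v) (hw : w ∈ (G.suppWE σ e m).1)
    (hf : f ∈ (G.suppWE σ e m).2) : ¬ G.Joins f v w := by
  intro hvw
  by_cases hwσ : G.onPath σ w
  · exact hvσ ⟨f, hsupp.mem_of_mem_suppWE_of_onPath m hw hwσ hf hvw.symm.incident_left,
      hvw.incident_left⟩
  obtain ⟨hW, hE⟩ := hsupp.wIsLevel_and_eIsAboveLevel m
  obtain ⟨hvV, hvl⟩ := (hW v).1 ⟨hv, hvσ⟩
  obtain ⟨hwV, hwl⟩ := (hW w).1 ⟨hw, hwσ⟩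
  obtain ⟨hfG, hfe, -⟩ := (hE f).1 hf
  rcases hsupp.treeEdge_eq_parentEdge (mem_treeEdges_of_joins hfG hfe hvw hvV hwV) hvw with
    ⟨-, h⟩ | ⟨-, h⟩ <;> omega

theorem IsSupport.filter_incident_suppWE_succ (hsupp : G.IsSupport σ e) (m : ℕ)
    (hv : v ∈ (G.suppWE σ e (m + 1)).1) (hvσ : ¬ G.onPath σ v) :
    ((G.suppWE σ e (m + 1)).2.filter fun f => f.1.1 = v ∨ f.1.2 = v) =
      (G.edges.filter fun f => f.1.1 = v ∨ f.1.2 = v).erase (G.parentEdge σ e v) := by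
  obtain ⟨hW, hE⟩ := hsupp.wIsLevel_and_eIsAboveLevel (m + 1)
  obtain ⟨hvV, hvl⟩ := (hW v).1 ⟨hv, hvσ⟩
  have hvr : v ∉ G.roots σ e := mt (level_eq_zero_iff hvV).2 (by omega)
  obtain ⟨hpe, u, huv, hu⟩ := parentEdge_spec hvV hvr
  ext f
  simp only [Finset.mem_filter, Finset.mem_erase, hE f]
  constructor
  · rintro ⟨⟨hf, -, hlev⟩, hfv⟩
    refine ⟨fun h => ?_, hf, hfv⟩
    have := hlev u (mem_suppVstar_of_mem_treeEdges hpe huv) (h ▸ huv.incident_left)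
    omega
  · rintro ⟨hfpe, hf, hfv⟩
    have hvw := joins_otherEnd hfv
    refine ⟨⟨hf, fun h => hvr (mem_roots_of_joins hvV (h ▸ hvw)), fun p hp hinc => ?_⟩, hfv⟩
    rcases hvw.incident_iff.1 hinc with rfl | rfl
    · omega
    · have := (hsupp.eq_parentEdge_of_joins hvV hvr hf hvw
        (not_onPath_of_mem_suppVstar hp) hfpe).2
      omega

theorem IsSupport.card_nbrs_suppWE_succ (hsupp : G.IsSupport σ e) (m : ℕ)
    (hv : v ∈ (G.suppWE σ e (m + 1)).1) (hvσ : ¬ G.onPath σ v) :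
    (G.nbrs (G.suppWE σ e (m + 1)).2 v).card = 2 := by
  obtain ⟨hvV, hvl⟩ := ((hsupp.wIsLevel_and_eIsAboveLevel (m + 1)).1 v).1 ⟨hv, hvσ⟩
  have hvr : v ∉ G.roots σ e := mt (level_eq_zero_iff hvV).2 (by omega)
  obtain ⟨⟨⟨hpe, -⟩, -⟩, u, huv, -⟩ := parentEdge_spec hvV hvr
  have h0 : v ≠ 0 := fun h => hvσ (h ▸ hsupp.1.onPath_zero)
  have hl : v ≠ Fin.last G.N := fun h => hvσ (h ▸ hsupp.1.onPath_last)
  rw [nbrs_eq_image, hsupp.filter_incident_suppWE_succ m hv hvσ, Finset.card_image_of_injOn,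
    Finset.card_erase_of_mem (by simpa [hpe] using huv.symm.incident_left),
    card_incident_of_ne h0 hl]
  intro f hf g hg hfg
  simp only [Finset.coe_erase, Finset.coe_filter, Set.mem_sdiff, Set.mem_ofPred_eq,
    Set.mem_singleton_iff] at hf hg
  have hvf := joins_otherEnd hf.1.2
  have hvg := joins_otherEnd hg.1.2
  rw [← hfg] at hvg
  by_cases hwσ : G.onPath σ (G.otherEnd v f)
  · exact hsupp.1.eq_of_incident_of_not_mem hwσ hf.1.1 hg.1.1 hvf.symm.incident_left
      hvg.symm.incident_left (fun h => hvσ ⟨f, h, hf.1.2⟩) (fun h => hvσ ⟨g, h, hg.1.2⟩)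
  · rw [(hsupp.eq_parentEdge_of_joins hvV hvr hf.1.1 hvf hwσ hf.2).1,
      (hsupp.eq_parentEdge_of_joins hvV hvr hg.1.1 hvg hwσ hg.2).1]

end Construction

end TLG

/-- **Lemma (Burdzy–Pal).** Let `σ*` be a support for a point in the interior of the edge
`e*` of a finite TLG `G`, and let `(W_m, G_m)`, `m ≥ 1`, be the associated inductive
construction (here `suppWE σ* e* m = (W_{m+1}, G_{m+1})`).  Then for every `m`:
(i) no vertex of `W_m` that is not a vertex of `σ*` has a neighbor in `G_m` that also lies
in `W_m`; and (ii) every vertex of `W_{m+1}` that is not a vertex of `σ*` has exactly two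
neighbors in the graph `G_{m+1}`. -/
theorem support_construction_two_neighbors (G : TLG) (σstar : List G.Edge) (estar : G.Edge)
    (hsupp : G.IsSupport σstar estar) :
    (∀ m : ℕ, ∀ v ∈ (G.suppWE σstar estar m).1, ¬ G.onPath σstar v →
      ∀ w ∈ (G.suppWE σstar estar m).1,
        ¬ ∃ e ∈ (G.suppWE σstar estar m).2,
            (e.1.1 = v ∧ e.1.2 = w) ∨ (e.1.1 = w ∧ e.1.2 = v)) ∧
    (∀ m : ℕ, ∀ v ∈ (G.suppWE σstar estar (m + 1)).1, ¬ G.onPath σstar v →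
      (G.nbrs (G.suppWE σstar estar (m + 1)).2 v).card = 2) :=
  ⟨fun m _v hv hvσ _w hw ⟨_f, hf, hvw⟩ => hsupp.not_joins_of_mem_suppWE m hv hvσ hw hf hvw,
    fun m _v hv hvσ => hsupp.card_nbrs_suppWE_succ m hv hvσ⟩
end
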